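/- arXiv:1710.05586 — 3 statements merged into one kernel-verified Lean document; each statement's English description precedes it below -/
import Mathlib

section
/- If π is an admissible combinatorial datum, then the combinatorial datum R^b(π) obtained by applying the bottom Rauzy operation is also admissible. -/
/-- A pair of bijections `πt πb : A ≃ Fin d` (0-indexed positions) is *admissible* if
`πt⁻¹{0,…,k-1} ≠ πb⁻¹{0,…,k-1}` for every `k = 1,…,d-1`. -/
def RauzyAdmissible {A : Type*} {d : ℕ} (πt πb : A ≃ Fin d) : Prop :=
  ∀ k : ℕ, 0 < k → k < d → {a : A | (πt a : ℕ) < k} ≠ {a : A | (πb a : ℕ) < k}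

/-!
Below the position `p = πt αb` the top row is unchanged, so the initial segments of length
`k ≤ p` of `R^b(π)` are those of `π` and admissibility is inherited. For `p < k < d`, the
letter `αb` lies in the top segment of length `k` but, sitting last in the bottom row, never in
the bottom one.
-/

theorem setOf_lt_eq_of_agree_le {A : Type*} {f g : A → ℕ} {p k : ℕ} (hk : k ≤ p + 1)
    (hle : ∀ a, f a ≤ p → g a = f a) (hgt : ∀ a, p < f a → p < g a) :
    {a | g a < k} = {a | f a < k} := by
  ext a
  simp only [Set.mem_ofPred_eq]
  rcases le_or_gt (f a) p with h | h
  · rw [hle a h]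
  · have := hgt a h
    omega

theorem bottom_Rauzy_operation_preserves_admissibility_general
    {A : Type*} {d : ℕ}
    (πt πb tt : A ≃ Fin d)
    (hadm : RauzyAdmissible πt πb)
    (αt αb : A) (hαb : (πb αb : ℕ) = d - 1)
    (htt1 : ∀ χ : A, (πt χ : ℕ) ≤ (πt αb : ℕ) → (tt χ : ℕ) = (πt χ : ℕ))
    (htt2 : (tt αt : ℕ) = (πt αb : ℕ) + 1)
    (htt3 : ∀ χ : A, χ ≠ αt → (πt αb : ℕ) < (πt χ : ℕ) → (tt χ : ℕ) = (πt χ : ℕ) + 1) :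
    RauzyAdmissible tt πb := by
  have htt_gt : ∀ χ, (πt αb : ℕ) < πt χ → (πt αb : ℕ) < tt χ := by
    intro χ hχ
    rcases eq_or_ne χ αt with rfl | hne
    · omega
    · rw [htt3 χ hne hχ]
      omega
  intro k hk0 hkd
  rcases le_or_gt k (πt αb : ℕ) with hk | hk
  · rw [setOf_lt_eq_of_agree_le (by omega) htt1 htt_gt]
    exact hadm k hk0 hkd
  · refine ne_of_mem_of_not_mem' (a := αb) ?_ ?_
    · simp only [Set.mem_ofPred_eq, htt1 αb le_rfl, hk]
    · simp only [Set.mem_ofPred_eq, hαb]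
      omega

/-- If `π = (πt, πb)` is admissible then the datum `R^b(π) = (tt, πb)` obtained by the
bottom Rauzy operation is also admissible. -/
theorem bottom_Rauzy_operation_preserves_admissibility
    {A : Type*} [Fintype A] {d : ℕ} (hd : d = Fintype.card A) (h2 : 2 ≤ d)
    (πt πb tt : A ≃ Fin d)
    (hadm : RauzyAdmissible πt πb)
    (αt αb : A) (hαt : (πt αt : ℕ) = d - 1) (hαb : (πb αb : ℕ) = d - 1)
    (htt1 : ∀ χ : A, (πt χ : ℕ) ≤ (πt αb : ℕ) → (tt χ : ℕ) = (πt χ : ℕ))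
    (htt2 : (tt αt : ℕ) = (πt αb : ℕ) + 1)
    (htt3 : ∀ χ : A, χ ≠ αt → (πt αb : ℕ) < (πt χ : ℕ) → (tt χ : ℕ) = (πt χ : ℕ) + 1) :
    RauzyAdmissible tt πb :=
  bottom_Rauzy_operation_preserves_admissibility_general πt πb tt hadm αt αb hαb htt1 htt2 htt3
end

section
/- An interval exchange transformation T = T(π, λ) with irrational-type length data admits the k-th Rauzy induction step for every k ∈ ℕ if and only if T has no connections, where a connection is a triple (β, α, n) with n ≥ 0, π_b(β) ≥ 2, π_t(α) ≥ 2 such that Tⁿ(u_β^b) = u_α^t. In particular, if λ belongs to the complement of a countable union of hyperplanes in ℝ₊^𝒜, then T is infinitely renormalizable. -/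
namespace KeaneIET

variable {A : Type*} [Fintype A] [DecidableEq A]

/-- Critical point `u^t_a = Σ_{π_t(χ) ≤ π_t(a) − 1} λ_χ`. -/
noncomputable def utI (pit : A → ℕ) (lam : A → ℝ) (a : A) : ℝ :=
  ∑ x ∈ Finset.univ.filter (fun x => pit x < pit a), lam x

/-- Critical value `u^b_a = Σ_{π_b(χ) ≤ π_b(a) − 1} λ_χ`. -/
noncomputable def ubI (pib : A → ℕ) (lam : A → ℝ) (a : A) : ℝ :=
  ∑ x ∈ Finset.univ.filter (fun x => pib x < pib a), lam x

/-- The interval exchange transformation `T(π,λ)`: on `I^t_a` it is the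
translation `x ↦ x − u^t_a + u^b_a`. -/
noncomputable def ietMap (pit pib : A → ℕ) (lam : A → ℝ) (x : ℝ) : ℝ :=
  if h : ∃ a : A, utI pit lam a ≤ x ∧ x < utI pit lam a + lam a then
    x - utI pit lam (Classical.choose h) + ubI pib lam (Classical.choose h)
  else x

/-- One step of Rauzy induction on interval exchange transformations, acting on
combinatorial and length data (positions in `{1,…,d}`). -/
def IETStep (d : ℕ) (pt pb pt' pb' : A → ℕ) (lam lam' : A → ℝ) : Prop :=
  ∃ at_ ab : A, pt at_ = d ∧ pb ab = d ∧
    ((lam ab < lam at_ ∧   -- top case, winner `at_`, loser `ab`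
        pt' = pt ∧
        (∀ x, pb x ≤ pb at_ → pb' x = pb x) ∧
        pb' ab = pb at_ + 1 ∧
        (∀ x, x ≠ ab → pb at_ < pb x → pb' x = pb x + 1) ∧
        lam' at_ = lam at_ - lam ab ∧ (∀ x, x ≠ at_ → lam' x = lam x)) ∨
      (lam at_ < lam ab ∧  -- bottom case, winner `ab`, loser `at_`
        pb' = pb ∧
        (∀ x, pt x ≤ pt ab → pt' x = pt x) ∧
        pt' at_ = pt ab + 1 ∧
        (∀ x, x ≠ at_ → pt ab < pt x → pt' x = pt x + 1) ∧
        lam' ab = lam ab - lam at_ ∧ (∀ x, x ≠ ab → lam' x = lam x)))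

/-- `T(π,λ)` admits the `k`-th step of Rauzy induction for every `k`. -/
def AdmitsAllSteps (d : ℕ) (pit pib : A → ℕ) (lam : A → ℝ) : Prop :=
  ∃ (pt pb : ℕ → A → ℕ) (L : ℕ → A → ℝ),
    pt 0 = pit ∧ pb 0 = pib ∧ L 0 = lam ∧
    ∀ k : ℕ, IETStep d (pt k) (pb k) (pt (k + 1)) (pb (k + 1)) (L k) (L (k + 1))

/-- `T(π,λ)` has a connection: a triple `(β, α, n)` with `n ≥ 0`,
`π_b(β) ≥ 2`, `π_t(α) ≥ 2` and `Tⁿ(u^b_β) = u^t_α`. -/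
def HasConnection (pit pib : A → ℕ) (lam : A → ℝ) : Prop :=
  ∃ (b a : A) (n : ℕ), 2 ≤ pib b ∧ 2 ≤ pit a ∧
    (ietMap pit pib lam)^[n] (ubI pib lam b) = utI pit lam a


end KeaneIET

set_option autoImplicit false

namespace KeaneIET

variable {A : Type*}

/-!
Rauzy induction replaces `T` by its first return map to `[0, |λ| - min(λ_{α_t}, λ_{α_b}))`.
Every critical point and value of an induced map lies on a `T`-orbit segment joining
critical points and values of `T`, so the first blocked step (`λ_{α_t} = λ_{α_b}`, i.e.
`u^t_{α_t} = u^b_{α_b}`) exhibits a connection. Conversely, a connection survives every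
induction step with a non-increasing length; once the length is stable the critical point
`u^t_α > 0` is never moved again, so the induction intervals stay longer than `u^t_α`.
This is impossible by Keane's argument: the loss `min(λ_{α_t}, λ_{α_b})` tends to zero,
so every letter that is infinitely often last on a row has length tending to zero; the
remaining letters are eventually frozen, and once all other letters have moved past them
they occupy initial segments of both rows, contradicting irreducibility.

The blocking condition along a fixed sequence of top/bottom moves is the vanishing of a
nonzero linear form in `λ`; there are countably many such sequences.
-/

/-- The top case of a Rauzy step: the letter `a` ending the top row wins against the letter
`b` ending the bottom row, which moves to the position right after `a`. -/
structure TopCase (d : ℕ) (pt pb pt' pb' : A → ℕ) (lam lam' : A → ℝ) (a b : A) : Prop where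
  top_last : pt a = d
  bot_last : pb b = d
  lt : lam b < lam a
  top_eq : pt' = pt
  bot_of_le : ∀ x, pb x ≤ pb a → pb' x = pb x
  bot_loser : pb' b = pb a + 1
  bot_of_gt : ∀ x, x ≠ b → pb a < pb x → pb' x = pb x + 1
  len_winner : lam' a = lam a - lam b
  len_of_ne : ∀ x, x ≠ a → lam' x = lam x

abbrev BotCase (d : ℕ) (pt pb pt' pb' : A → ℕ) (lam lam' : A → ℝ) (a b : A) : Prop :=
  TopCase d pb pt pb' pt' lam lam' b a

section RauzyStep

variable {d : ℕ} {pt pb pt' pb' : A → ℕ} {lam lam' : A → ℝ}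

theorem ietStep_iff : IETStep d pt pb pt' pb' lam lam' ↔
    ∃ a b, TopCase d pt pb pt' pb' lam lam' a b ∨ BotCase d pt pb pt' pb' lam lam' a b := by
  constructor
  · rintro ⟨a, b, ha, hb, ⟨h₁, h₂, h₃, h₄, h₅, h₆, h₇⟩ | ⟨h₁, h₂, h₃, h₄, h₅, h₆, h₇⟩⟩
    exacts [⟨a, b, .inl ⟨ha, hb, h₁, h₂, h₃, h₄, h₅, h₆, h₇⟩⟩,
      ⟨a, b, .inr ⟨hb, ha, h₁, h₂, h₃, h₄, h₅, h₆, h₇⟩⟩]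
  · rintro ⟨a, b, ⟨ha, hb, h₁, h₂, h₃, h₄, h₅, h₆, h₇⟩ | ⟨hb, ha, h₁, h₂, h₃, h₄, h₅, h₆, h₇⟩⟩
    exacts [⟨a, b, ha, hb, .inl ⟨h₁, h₂, h₃, h₄, h₅, h₆, h₇⟩⟩,
      ⟨a, b, ha, hb, .inr ⟨h₁, h₂, h₃, h₄, h₅, h₆, h₇⟩⟩]

theorem IETStep.swap (hs : IETStep d pt pb pt' pb' lam lam') :
    IETStep d pb pt pb' pt' lam lam' := by
  obtain ⟨a, b, h⟩ := ietStep_iff.1 hs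
  exact ietStep_iff.2 ⟨b, a, h.symm⟩

variable [DecidableEq A] {a b : A} (tc : TopCase d pt pb pt' pb' lam lam' a b)
include tc

theorem TopCase.bot_eq_ite (x : A) :
    pb' x = if pb x ≤ pb a then pb x else if x = b then pb a + 1 else pb x + 1 := by
  split_ifs with h₁ h₂
  · exact tc.bot_of_le x h₁
  · exact h₂ ▸ tc.bot_loser
  · exact tc.bot_of_gt x h₂ (not_le.1 h₁)

theorem TopCase.lam_eq_update : lam' = Function.update lam a (lam a - lam b) := by
  funext x
  rcases eq_or_ne x a with rfl | hx
  · rw [Function.update_self, tc.len_winner]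
  · rw [Function.update_of_ne hx, tc.len_of_ne x hx]

end RauzyStep

variable [Fintype A]

noncomputable def totalLength (lam : A → ℝ) : ℝ := ∑ x, lam x

structure IsNumbering (d : ℕ) (p : A → ℕ) : Prop where
  injective : Function.Injective p
  one_le : ∀ a, 1 ≤ p a
  le : ∀ a, p a ≤ d
  card_eq : Fintype.card A = d

namespace IsNumbering

variable {d : ℕ} {p : A → ℕ}

theorem of_bijOn (h : Set.BijOn p Set.univ (Set.Ico 1 (Fintype.card A + 1))) :
    IsNumbering (Fintype.card A) p where
  injective := Set.injOn_univ.1 h.injOn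
  one_le a := (h.mapsTo (Set.mem_univ a)).1
  le a := Nat.lt_succ_iff.1 (h.mapsTo (Set.mem_univ a)).2
  card_eq := rfl

theorem image_univ (hp : IsNumbering d p) : Finset.univ.image p = Finset.Icc 1 d := by
  refine Finset.eq_of_subset_of_card_le (fun n hn => ?_) ?_
  · obtain ⟨a, -, rfl⟩ := Finset.mem_image.1 hn
    exact Finset.mem_Icc.2 ⟨hp.one_le a, hp.le a⟩
  · rw [Finset.card_image_of_injective _ hp.injective, Finset.card_univ, hp.card_eq,
      Nat.card_Icc, Nat.add_sub_cancel]

theorem exists_eq (hp : IsNumbering d p) {n : ℕ} (h1 : 1 ≤ n) (hn : n ≤ d) :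
    ∃ a, p a = n := by
  have : n ∈ Finset.univ.image p := hp.image_univ ▸ Finset.mem_Icc.2 ⟨h1, hn⟩
  simpa using this

theorem lt_of_ne_last (hp : IsNumbering d p) {a x : A} (ha : p a = d) (hx : x ≠ a) : p x < d :=
  lt_of_le_of_ne (hp.le x) fun h => hx (hp.injective (h.trans ha.symm))

theorem le_pred_iff_ne_last (hp : IsNumbering d p) {a x : A} (ha : p a = d) :
    p x ≤ d - 1 ↔ x ≠ a := by
  constructor
  · rintro h rfl
    have := hp.one_le x
    omega
  · intro hx
    have := hp.lt_of_ne_last ha hx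
    omega

theorem card_filter_le (hp : IsNumbering d p) {n : ℕ} (hn : n ≤ d) :
    (Finset.univ.filter fun a => p a ≤ n).card = n := by
  have himage : (Finset.univ.filter fun a => p a ≤ n).image p = Finset.Icc 1 n := by
    ext m
    simp only [Finset.mem_image, Finset.mem_filter, Finset.mem_univ, true_and, Finset.mem_Icc]
    constructor
    · rintro ⟨a, ha, rfl⟩
      exact ⟨hp.one_le a, ha⟩
    · rintro ⟨h1, h2⟩
      obtain ⟨a, rfl⟩ := hp.exists_eq h1 (h2.trans hn)
      exact ⟨a, h2, rfl⟩
  rw [← Finset.card_image_of_injective _ hp.injective, himage, Nat.card_Icc, Nat.add_sub_cancel]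

end IsNumbering

section CriticalPoints

variable {d : ℕ} {p : A → ℕ} {lam : A → ℝ}

theorem utI_nonneg (hpos : ∀ a, 0 < lam a) (a : A) : 0 ≤ utI p lam a :=
  Finset.sum_nonneg fun x _ => (hpos x).le

theorem utI_add_eq_sum_cons (a : A) :
    utI p lam a + lam a = ∑ x ∈ (Finset.univ.filter fun x => p x < p a).cons a (by simp),
      lam x := by
  rw [Finset.sum_cons, utI, add_comm]

theorem utI_succ (hinj : Function.Injective p) {a b : A} (h : p b = p a + 1) :
    utI p lam b = utI p lam a + lam a := by
  rw [utI_add_eq_sum_cons, utI]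
  congr 1
  ext x
  simp only [Finset.mem_filter, Finset.mem_univ, true_and, Finset.mem_cons, h]
  refine ⟨fun hx => ?_, by rintro (rfl | hx) <;> omega⟩
  rcases Nat.lt_succ_iff_lt_or_eq.1 hx with hx | hx
  exacts [Or.inr hx, Or.inl (hinj hx)]

theorem utI_add_le_of_lt (hpos : ∀ a, 0 < lam a) {a b : A} (h : p a < p b) :
    utI p lam a + lam a ≤ utI p lam b := by
  rw [utI_add_eq_sum_cons]
  refine Finset.sum_le_sum_of_subset_of_nonneg (fun x hx => ?_) fun x _ _ => (hpos x).le
  simp only [Finset.mem_cons, Finset.mem_filter, Finset.mem_univ, true_and] at hx ⊢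
  rcases hx with rfl | hx <;> omega

theorem utI_add_le_totalLength (hpos : ∀ a, 0 < lam a) (a : A) :
    utI p lam a + lam a ≤ totalLength lam := by
  rw [utI_add_eq_sum_cons]
  exact Finset.sum_le_sum_of_subset_of_nonneg (Finset.subset_univ _) fun x _ _ => (hpos x).le

theorem utI_lt_totalLength (hpos : ∀ a, 0 < lam a) (a : A) : utI p lam a < totalLength lam :=
  (lt_add_of_pos_right _ (hpos a)).trans_le (utI_add_le_totalLength hpos a)

theorem eq_of_mem_Ico_utI (hinj : Function.Injective p) (hpos : ∀ a, 0 < lam a)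
    {a b : A} {x : ℝ} (ha : x ∈ Set.Ico (utI p lam a) (utI p lam a + lam a))
    (hb : x ∈ Set.Ico (utI p lam b) (utI p lam b + lam b)) : a = b := by
  rcases Nat.lt_trichotomy (p a) (p b) with h | h | h
  · linarith [utI_add_le_of_lt (lam := lam) hpos h, ha.2, hb.1]
  · exact hinj h
  · linarith [utI_add_le_of_lt (lam := lam) hpos h, ha.1, hb.2]

namespace IsNumbering

variable (hp : IsNumbering d p)
include hp

theorem utI_eq_totalLength_sub {a : A} (ha : p a = d) :
    utI p lam a = totalLength lam - lam a := by
  have huniv : Finset.univ = (Finset.univ.filter fun x => p x < p a).cons a (by simp) := by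
    ext x
    simp only [Finset.mem_univ, Finset.mem_cons, Finset.mem_filter, true_and, true_iff]
    rcases eq_or_ne x a with rfl | hx
    exacts [Or.inl rfl, Or.inr (ha ▸ hp.lt_of_ne_last ha hx)]
  rw [totalLength, huniv, ← utI_add_eq_sum_cons]
  ring

theorem utI_le_utI_last {a : A} (hpos : ∀ a, 0 < lam a) (ha : p a = d) (z : A) :
    utI p lam z ≤ utI p lam a := by
  rcases eq_or_ne z a with rfl | hz
  · exact le_rfl
  · linarith [utI_add_le_of_lt (lam := lam) hpos (ha ▸ hp.lt_of_ne_last ha hz), hpos z]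

theorem utI_eq_zero {a : A} (ha : p a = 1) : utI p lam a = 0 := by
  refine Finset.sum_eq_zero fun x hx => ?_
  have := hp.one_le x
  simp only [Finset.mem_filter, Finset.mem_univ, true_and, ha] at hx
  omega

theorem utI_pos (hpos : ∀ a, 0 < lam a) {a : A} (ha : 2 ≤ p a) : 0 < utI p lam a := by
  obtain ⟨b, hb⟩ := hp.exists_eq le_rfl (by have := hp.le a; omega)
  refine Finset.sum_pos (fun x _ => hpos x) ⟨b, ?_⟩
  simp only [Finset.mem_filter, Finset.mem_univ, true_and]
  omega

theorem exists_mem_Ico_utI {x : ℝ}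
    (hx : x ∈ Set.Ico 0 (totalLength lam)) :
    ∃ a, x ∈ Set.Ico (utI p lam a) (utI p lam a + lam a) := by
  have hd : 1 ≤ d := by
    by_contra! h
    have : IsEmpty A := Fintype.card_eq_zero_iff.1 (by have := hp.card_eq; omega)
    simp [totalLength] at hx
  obtain ⟨a₁, ha₁⟩ := hp.exists_eq le_rfl hd
  obtain ⟨a, ha, hmax⟩ := Finset.exists_max_image (Finset.univ.filter fun a => utI p lam a ≤ x)
    p ⟨a₁, by simpa [hp.utI_eq_zero ha₁] using hx.1⟩
  refine ⟨a, (Finset.mem_filter.1 ha).2, lt_of_not_ge fun hge => ?_⟩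
  rcases (hp.le a).eq_or_lt with hlast | hlt
  · linarith [hp.utI_eq_totalLength_sub (lam := lam) hlast, hx.2]
  · obtain ⟨b, hb⟩ := hp.exists_eq (by omega : 1 ≤ p a + 1) hlt
    have := hmax b (by simpa [utI_succ hp.injective hb] using hge)
    omega

end IsNumbering

end CriticalPoints

structure IsAdmissible (d : ℕ) (pt pb : A → ℕ) (lam : A → ℝ) : Prop where
  top : IsNumbering d pt
  bot : IsNumbering d pb
  two_le : 2 ≤ d
  pos : ∀ a, 0 < lam a
  irreducible : ∀ k, 1 ≤ k → k < d → {a : A | pt a ≤ k} ≠ {a : A | pb a ≤ k}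

namespace IsAdmissible

variable {d : ℕ} {pt pb : A → ℕ} {lam : A → ℝ}

theorem symm (g : IsAdmissible d pt pb lam) : IsAdmissible d pb pt lam :=
  ⟨g.bot, g.top, g.two_le, g.pos, fun k h1 h2 h => g.irreducible k h1 h2 h.symm⟩

theorem nonempty (g : IsAdmissible d pt pb lam) : Nonempty A :=
  Fintype.card_pos_iff.1 (by have := g.top.card_eq; have := g.two_le; omega)

variable (g : IsAdmissible d pt pb lam)
include g

theorem ne_of_last {a b : A} (ha : pt a = d) (hb : pb b = d) : a ≠ b := by
  rintro rfl
  refine g.irreducible (d - 1) (by have := g.two_le; omega) (by have := g.two_le; omega) ?_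
  exact Set.ext fun x => (g.top.le_pred_iff_ne_last ha).trans (g.bot.le_pred_iff_ne_last hb).symm

theorem bot_lt_of_last {a b : A} (ha : pt a = d) (hb : pb b = d) : pb a < d :=
  g.bot.lt_of_ne_last hb (g.ne_of_last ha hb)

theorem ietMap_apply {x : ℝ} {a : A} (h : x ∈ Set.Ico (utI pt lam a) (utI pt lam a + lam a)) :
    ietMap pt pb lam x = x - utI pt lam a + utI pb lam a := by
  have hex : ∃ a, utI pt lam a ≤ x ∧ x < utI pt lam a + lam a := ⟨a, h⟩
  rw [ietMap, dif_pos hex]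
  obtain rfl := eq_of_mem_Ico_utI g.top.injective g.pos hex.choose_spec h
  rfl

theorem ietMap_mem_Ico {x : ℝ} {a : A}
    (h : x ∈ Set.Ico (utI pt lam a) (utI pt lam a + lam a)) :
    ietMap pt pb lam x ∈ Set.Ico (utI pb lam a) (utI pb lam a + lam a) := by
  rw [g.ietMap_apply h]
  constructor <;> linarith [h.1, h.2]

theorem ietMap_mapsTo :
    Set.MapsTo (ietMap pt pb lam) (Set.Ico 0 (totalLength lam)) (Set.Ico 0 (totalLength lam)) := by
  intro x hx
  obtain ⟨a, ha⟩ := g.top.exists_mem_Ico_utI hx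
  have h := g.ietMap_mem_Ico ha
  exact ⟨(utI_nonneg g.pos a).trans h.1, h.2.trans_le (utI_add_le_totalLength g.pos a)⟩

theorem ietMap_injOn : Set.InjOn (ietMap pt pb lam) (Set.Ico 0 (totalLength lam)) := by
  intro x hx y hy hxy
  obtain ⟨a, ha⟩ := g.top.exists_mem_Ico_utI hx
  obtain ⟨b, hb⟩ := g.top.exists_mem_Ico_utI hy
  have hab : a = b :=
    eq_of_mem_Ico_utI g.bot.injective g.pos (hxy ▸ g.ietMap_mem_Ico ha) (g.ietMap_mem_Ico hb)
  subst hab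
  rw [g.ietMap_apply ha, g.ietMap_apply hb] at hxy
  linarith

theorem false_of_initial_segments {P : Finset A} {n m : ℕ} (hn₁ : 1 ≤ n) (hn : n < d)
    (hm : m ≤ d) (ht : ∀ z, pt z ≤ n ↔ z ∈ P) (hb : ∀ z, pb z ≤ m ↔ z ∈ P) : False := by
  have hnm : n = m := by
    rw [← g.top.card_filter_le hn.le, ← g.bot.card_filter_le hm]
    congr 1
    ext z
    simp only [Finset.mem_filter, Finset.mem_univ, true_and, ht, hb]
  exact g.irreducible n hn₁ hn (Set.ext fun z => (ht z).trans (hnm ▸ hb z).symm)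

end IsAdmissible

theorem IsAdmissible.of_bijOn (h2 : 2 ≤ Fintype.card A) {pit pib : A → ℕ} {lam : A → ℝ}
    (hpit : Set.BijOn pit Set.univ (Set.Ico 1 (Fintype.card A + 1)))
    (hpib : Set.BijOn pib Set.univ (Set.Ico 1 (Fintype.card A + 1)))
    (hadm : ∀ k : ℕ, 1 ≤ k → k < Fintype.card A → {a : A | pit a ≤ k} ≠ {a : A | pib a ≤ k})
    (hpos : ∀ x, 0 < lam x) : IsAdmissible (Fintype.card A) pit pib lam :=
  ⟨.of_bijOn hpit, .of_bijOn hpib, h2, hpos, hadm⟩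

namespace TopCase

variable {d : ℕ} {pt pb pt' pb' : A → ℕ} {lam lam' : A → ℝ} {a b : A}
  (tc : TopCase d pt pb pt' pb' lam lam' a b)
include tc

theorem totalLength_eq : totalLength lam' = totalLength lam - lam b := by
  classical
  rw [tc.lam_eq_update, totalLength, Finset.sum_update_of_mem (Finset.mem_univ a),
    ← Finset.erase_eq, totalLength, ← Finset.add_sum_erase _ lam (Finset.mem_univ a)]
  ring

variable (g : IsAdmissible d pt pb lam)
include g

theorem pos : ∀ x, 0 < lam' x := by
  intro x
  by_cases hx : x = a
  · rw [hx, tc.len_winner]; linarith [tc.lt]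
  · rw [tc.len_of_ne x hx]; exact g.pos x

theorem utI_top_eq (z : A) : utI pt' lam' z = utI pt lam z := by
  rw [utI, utI, tc.top_eq]
  refine Finset.sum_congr rfl fun x hx => tc.len_of_ne x ?_
  rintro rfl
  simp only [Finset.mem_filter, Finset.mem_univ, true_and, tc.top_last] at hx
  exact absurd (g.top.le z) (by omega)

variable [DecidableEq A]

theorem bot_isNumbering : IsNumbering d pb' := by
  have hwin := g.bot_lt_of_last tc.top_last tc.bot_last
  have hlt : ∀ x, x ≠ b → pb x < d := fun x hx => g.bot.lt_of_ne_last tc.bot_last hx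
  have hb := tc.bot_last
  refine ⟨fun x y hxy => ?_, fun x => ?_, fun x => ?_, g.bot.card_eq⟩
  · rw [tc.bot_eq_ite, tc.bot_eq_ite] at hxy
    have := g.bot.injective.eq_iff (a := x) (b := y)
    split_ifs at hxy with h₁ h₂ h₃ h₄ h₅ h₆ <;> subst_vars <;> first | rfl | omega | simp_all
  · rw [tc.bot_eq_ite]
    have := g.bot.one_le x
    split_ifs <;> omega
  · rw [tc.bot_eq_ite]
    have := g.bot.le x
    split_ifs with h₁ h₂
    · exact this
    · omega
    · have := hlt x h₂; omega

theorem bot_le_iff {k : ℕ} (hk : k ≤ pb a) (x : A) : pb' x ≤ k ↔ pb x ≤ k := by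
  rw [tc.bot_eq_ite]
  have := g.bot_lt_of_last tc.top_last tc.bot_last
  have := tc.bot_last
  split_ifs with h₁ h₂
  · rfl
  · subst h₂; omega
  · omega

theorem isAdmissible : IsAdmissible d pt' pb' lam' := by
  refine ⟨tc.top_eq ▸ g.top, tc.bot_isNumbering g, g.two_le, tc.pos g,
    fun k hk₁ hk hEq => ?_⟩
  rw [tc.top_eq] at hEq
  by_cases hka : k ≤ pb a
  · exact g.irreducible k hk₁ hk (hEq.trans (Set.ext (tc.bot_le_iff g hka)))
  · have hmem : a ∈ {x | pb' x ≤ k} := by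
      show pb' a ≤ k
      rw [tc.bot_of_le a le_rfl]
      omega
    rw [← hEq] at hmem
    exact absurd (tc.top_last ▸ hmem : d ≤ k) (by omega)

theorem bot_eq_one_iff (x : A) : pb' x = 1 ↔ pb x = 1 := by
  rw [tc.bot_eq_ite]
  have := g.bot.one_le a
  have := g.bot.one_le x
  have := g.two_le
  have := tc.bot_last
  split_ifs with h₁ h₂
  · rfl
  · subst h₂; omega
  · omega

theorem utI_bot_eq_of_le {z : A} (hza : pb z ≤ pb a) : utI pb' lam' z = utI pb lam z := by
  have hwin := g.bot_lt_of_last tc.top_last tc.bot_last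
  have hb := tc.bot_last
  have hset : Finset.univ.filter (fun x => pb' x < pb' z)
      = Finset.univ.filter (fun x => pb x < pb z) := by
    ext x
    simp only [Finset.mem_filter, Finset.mem_univ, true_and]
    rw [tc.bot_eq_ite x, tc.bot_eq_ite z, if_pos hza]
    split_ifs with h₁ h₂
    · rfl
    · subst h₂; omega
    · omega
  rw [utI, utI, hset]
  refine Finset.sum_congr rfl fun x hx => tc.len_of_ne x ?_
  rintro rfl
  simp only [Finset.mem_filter, Finset.mem_univ, true_and] at hx
  omega

/-- Behind the winner, the loser is inserted and the winner shortened by the same amount. -/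
theorem utI_bot_eq_of_gt {z : A} (hz : z ≠ b) (hza : pb a < pb z) :
    utI pb' lam' z = utI pb lam z := by
  have hzd := g.bot.lt_of_ne_last tc.bot_last hz
  have hz' : pb' z = pb z + 1 := tc.bot_of_gt z hz hza
  have hset : Finset.univ.filter (fun x => pb' x < pb' z)
      = insert b (Finset.univ.filter (fun x => pb x < pb z)) := by
    ext x
    simp only [Finset.mem_filter, Finset.mem_univ, true_and, Finset.mem_insert, hz']
    rw [tc.bot_eq_ite x]
    split_ifs with h₁ h₂
    · exact ⟨fun _ => Or.inr (by omega), fun _ => by omega⟩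
    · exact ⟨fun _ => Or.inl h₂, fun _ => by omega⟩
    · refine ⟨fun h => Or.inr (by omega), ?_⟩
      rintro (h | h)
      exacts [absurd h h₂, by omega]
  have hbnot : b ∉ Finset.univ.filter (fun x => pb x < pb z) := by
    simp only [Finset.mem_filter, Finset.mem_univ, true_and, tc.bot_last, not_lt]
    omega
  have hain : a ∈ Finset.univ.filter (fun x => pb x < pb z) := by
    simpa using hza
  rw [utI, utI, hset, Finset.sum_insert hbnot,
    tc.len_of_ne b (g.ne_of_last tc.top_last tc.bot_last).symm,
    tc.lam_eq_update, Finset.sum_update_of_mem hain, ← Finset.erase_eq,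
    ← Finset.add_sum_erase _ lam hain]
  ring

theorem utI_bot_eq {z : A} (hz : z ≠ b) : utI pb' lam' z = utI pb lam z :=
  (le_or_gt (pb z) (pb a)).elim (tc.utI_bot_eq_of_le g) (tc.utI_bot_eq_of_gt g hz)

theorem utI_bot_loser : utI pb' lam' b = utI pb lam a + lam a - lam b := by
  have hwin := g.bot_lt_of_last tc.top_last tc.bot_last
  have hb := tc.bot_last
  have hset : Finset.univ.filter (fun x => pb' x < pb' b)
      = insert a (Finset.univ.filter (fun x => pb x < pb a)) := by
    ext x
    simp only [Finset.mem_filter, Finset.mem_univ, true_and, Finset.mem_insert, tc.bot_loser]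
    rw [tc.bot_eq_ite x]
    split_ifs with h₁ h₂
    · refine ⟨fun _ => ?_, fun _ => by omega⟩
      rcases eq_or_ne x a with rfl | hxa
      exacts [Or.inl rfl, Or.inr (lt_of_le_of_ne h₁ fun h => hxa (g.bot.injective h))]
    · subst h₂
      exact ⟨fun h => by omega, by rintro (rfl | h) <;> omega⟩
    · exact ⟨fun h => by omega, by rintro (rfl | h) <;> omega⟩
  have hsum : ∑ x ∈ Finset.univ.filter (fun x => pb x < pb a), lam' x = utI pb lam a :=
    Finset.sum_congr rfl fun x hx => tc.len_of_ne x (by rintro rfl; simp at hx)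
  rw [utI, hset, Finset.sum_insert (by simp), hsum, tc.len_winner]
  ring

end TopCase

/-- `T'` is the first return map of `T` to `[0, s')`, and `T` maps `[s', s)` into `[0, s')`,
so that all return times are `1` or `2`. -/
structure IsFirstReturn (T T' : ℝ → ℝ) (s s' : ℝ) : Prop where
  apply_eq : ∀ y ∈ Set.Ico 0 s',
    (T' y = T y ∧ T y ∈ Set.Ico 0 s') ∨ (T' y = T (T y) ∧ T y ∈ Set.Ico s' s)
  mapsTo : Set.MapsTo T (Set.Ico s' s) (Set.Ico 0 s')

namespace IsFirstReturn

variable {T T' : ℝ → ℝ} {s s' : ℝ} (h : IsFirstReturn T T' s s')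
include h

theorem mapsTo_Ico : Set.MapsTo T' (Set.Ico 0 s') (Set.Ico 0 s') := by
  intro y hy
  rcases h.apply_eq y hy with ⟨h₁, h₂⟩ | ⟨h₁, h₂⟩
  exacts [h₁ ▸ h₂, h₁ ▸ h.mapsTo h₂]

theorem exists_iterate_eq {y : ℝ} (hy : y ∈ Set.Ico 0 s') {j : ℕ} (hj : T^[j] y < s') :
    ∃ r ≤ j, T'^[r] y = T^[j] y := by
  have key : ∀ j, ∃ r ≤ j, T^[j] y = T'^[r] y ∨
      (T^[j] y ∈ Set.Ico s' s ∧ T'^[r] y = T (T^[j] y)) := by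
    intro j
    induction j with
    | zero => exact ⟨0, le_rfl, .inl rfl⟩
    | succ j ih =>
      obtain ⟨r, hr, hA | ⟨hB, hB'⟩⟩ := ih
      · rw [Function.iterate_succ_apply', hA]
        rcases h.apply_eq _ (h.mapsTo_Ico.iterate r hy) with ⟨h₁, -⟩ | ⟨h₁, h₂⟩
        · exact ⟨r + 1, by omega, .inl (by rw [Function.iterate_succ_apply', h₁])⟩
        · exact ⟨r + 1, by omega, .inr ⟨h₂, by rw [Function.iterate_succ_apply', h₁]⟩⟩
      · exact ⟨r, by omega, .inl (by rw [Function.iterate_succ_apply', hB'])⟩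
  obtain ⟨r, hr, hA | ⟨hB, -⟩⟩ := key j
  exacts [⟨r, hr, hA.symm⟩, absurd hB.1 (not_le.2 hj)]

end IsFirstReturn

namespace TopCase

variable {d : ℕ} {pt pb pt' pb' : A → ℕ} {lam lam' : A → ℝ} {a b : A}
  (tc : TopCase d pt pb pt' pb' lam lam' a b) (g : IsAdmissible d pt pb lam)
include tc g

theorem mapsTo_Ico :
    Set.MapsTo (ietMap pt pb lam) (Set.Ico (totalLength lam') (totalLength lam))
      (Set.Ico 0 (totalLength lam')) := by
  intro y hy
  have hut := g.top.utI_eq_totalLength_sub (lam := lam) tc.top_last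
  have hub := g.bot.utI_eq_totalLength_sub (lam := lam) tc.bot_last
  have hba : utI pb lam a + lam a ≤ utI pb lam b :=
    utI_add_le_of_lt g.pos (tc.bot_last ▸ g.bot_lt_of_last tc.top_last tc.bot_last)
  have hya : y ∈ Set.Ico (utI pt lam a) (utI pt lam a + lam a) := by
    constructor <;> linarith [hy.1, hy.2, tc.lt, tc.totalLength_eq]
  rw [g.ietMap_apply hya]
  constructor <;> linarith [hy.1, hy.2, utI_nonneg (p := pb) g.pos a, tc.lt, tc.totalLength_eq]

variable [DecidableEq A]

theorem utI_bot_loser_eq_ietMap : utI pb' lam' b = ietMap pt pb lam (utI pb lam b) := by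
  have hut := g.top.utI_eq_totalLength_sub (lam := lam) tc.top_last
  have hub := g.bot.utI_eq_totalLength_sub (lam := lam) tc.bot_last
  have hmem : utI pb lam b ∈ Set.Ico (utI pt lam a) (utI pt lam a + lam a) := by
    constructor <;> linarith [tc.lt, g.pos b]
  rw [g.ietMap_apply hmem, tc.utI_bot_loser g, hut, hub]
  ring

section

variable {y : ℝ} {c : A} (hc : y ∈ Set.Ico (utI pt lam c) (utI pt lam c + lam c))
include hc

theorem mem_Ico_utI_top (hy : y < totalLength lam') :
    y ∈ Set.Ico (utI pt' lam' c) (utI pt' lam' c + lam' c) := by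
  rw [tc.utI_top_eq g]
  by_cases hca : c = a
  · subst hca
    have := g.top.utI_eq_totalLength_sub (lam := lam) tc.top_last
    exact ⟨hc.1, by linarith [tc.len_winner, tc.totalLength_eq]⟩
  · exact tc.len_of_ne c hca ▸ hc

theorem ietMap_eq_of_ne (hy : y < totalLength lam') (hcb : c ≠ b) :
    ietMap pt' pb' lam' y = ietMap pt pb lam y ∧
      ietMap pt pb lam y ∈ Set.Ico 0 (totalLength lam') := by
  have hcb' : utI pb lam c + lam c ≤ utI pb lam b :=
    utI_add_le_of_lt g.pos (tc.bot_last ▸ g.bot.lt_of_ne_last tc.bot_last hcb)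
  have := g.bot.utI_eq_totalLength_sub (lam := lam) tc.bot_last
  rw [(tc.isAdmissible g).ietMap_apply (tc.mem_Ico_utI_top g hc hy), g.ietMap_apply hc,
    tc.utI_top_eq g, tc.utI_bot_eq g hcb]
  refine ⟨rfl, ?_, ?_⟩ <;>
    linarith [hc.1, hc.2, utI_nonneg (p := pb) g.pos c, tc.totalLength_eq]

theorem ietMap_eq_of_loser (hy : y < totalLength lam') (hcb : c = b) :
    ietMap pt' pb' lam' y = ietMap pt pb lam (ietMap pt pb lam y) ∧
      ietMap pt pb lam y ∈ Set.Ico (totalLength lam') (totalLength lam) := by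
  subst hcb
  have hut := g.top.utI_eq_totalLength_sub (lam := lam) tc.top_last
  have hub := g.bot.utI_eq_totalLength_sub (lam := lam) tc.bot_last
  have hT := g.ietMap_apply (pb := pb) hc
  have hTa : ietMap pt pb lam y ∈ Set.Ico (utI pt lam a) (utI pt lam a + lam a) := by
    constructor <;> linarith [hc.1, hc.2, tc.lt]
  rw [(tc.isAdmissible g).ietMap_apply (tc.mem_Ico_utI_top g hc hy), g.ietMap_apply hTa, hT,
    tc.utI_top_eq g, tc.utI_bot_loser g]
  refine ⟨by linarith, ?_, ?_⟩ <;> linarith [hc.1, hc.2, tc.totalLength_eq]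

end

theorem isFirstReturn :
    IsFirstReturn (ietMap pt pb lam) (ietMap pt' pb' lam') (totalLength lam)
      (totalLength lam') := by
  refine ⟨fun y hy => ?_, tc.mapsTo_Ico g⟩
  obtain ⟨c, hc⟩ := g.top.exists_mem_Ico_utI ⟨hy.1, hy.2.trans
    (show totalLength lam' < totalLength lam by linarith [g.pos b, tc.totalLength_eq])⟩
  by_cases hcb : c = b
  exacts [.inr (tc.ietMap_eq_of_loser g hc hy.2 hcb), .inl (tc.ietMap_eq_of_ne g hc hy.2 hcb)]

end TopCase

namespace BotCase

variable {d : ℕ} {pt pb pt' pb' : A → ℕ} {lam lam' : A → ℝ} {a b : A}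
  (bc : BotCase d pt pb pt' pb' lam lam' a b) (g : IsAdmissible d pt pb lam)
include bc g

theorem mapsTo_Ico :
    Set.MapsTo (ietMap pt pb lam) (Set.Ico (totalLength lam') (totalLength lam))
      (Set.Ico 0 (totalLength lam')) := by
  intro y hy
  have hut := g.top.utI_eq_totalLength_sub (lam := lam) bc.bot_last
  have hub := g.bot.utI_eq_totalLength_sub (lam := lam) bc.top_last
  have hab : utI pb lam a + lam a ≤ utI pb lam b :=
    utI_add_le_of_lt g.pos (bc.top_last ▸ g.bot_lt_of_last bc.bot_last bc.top_last)
  have hya : y ∈ Set.Ico (utI pt lam a) (utI pt lam a + lam a) := by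
    constructor <;> linarith [hy.1, hy.2, bc.totalLength_eq]
  rw [g.ietMap_apply hya]
  constructor <;> linarith [hy.1, hy.2, utI_nonneg (p := pb) g.pos a, bc.lt, bc.totalLength_eq]

variable [DecidableEq A]

theorem ietMap_utI_top_loser : ietMap pt pb lam (utI pt' lam' a) = utI pt lam a := by
  have hut := g.top.utI_eq_totalLength_sub (lam := lam) bc.bot_last
  have hub := g.bot.utI_eq_totalLength_sub (lam := lam) bc.top_last
  have hloser := bc.utI_bot_loser g.symm
  have hmem : utI pt' lam' a ∈ Set.Ico (utI pt lam b) (utI pt lam b + lam b) := by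
    rw [hloser]
    constructor <;> linarith [bc.lt, g.pos a]
  rw [g.ietMap_apply hmem, hloser, hut, hub]
  ring

section

variable {y : ℝ} {c : A} (hc : y ∈ Set.Ico (utI pt lam c) (utI pt lam c + lam c))
include hc

theorem ietMap_eq_of_ne (hca : c ≠ a) (hcb : c ≠ b) :
    ietMap pt' pb' lam' y = ietMap pt pb lam y ∧
      ietMap pt pb lam y ∈ Set.Ico 0 (totalLength lam') := by
  have hub := g.bot.utI_eq_totalLength_sub (lam := lam) bc.top_last
  have hc' : y ∈ Set.Ico (utI pt' lam' c) (utI pt' lam' c + lam' c) := by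
    rw [bc.utI_bot_eq g.symm hca, bc.len_of_ne c hcb]
    exact hc
  have hcb' : utI pb lam c + lam c ≤ utI pb lam b :=
    utI_add_le_of_lt g.pos (bc.top_last ▸ g.bot.lt_of_ne_last bc.top_last hcb)
  rw [(bc.isAdmissible g.symm).symm.ietMap_apply hc', g.ietMap_apply hc,
    bc.utI_bot_eq g.symm hca, bc.utI_top_eq g.symm]
  refine ⟨rfl, ?_, ?_⟩ <;>
    linarith [hc.1, hc.2, utI_nonneg (p := pb) g.pos c, bc.lt, bc.totalLength_eq]

theorem ietMap_eq_of_lt (hcb : c = b) (hy : y < utI pt' lam' a) :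
    ietMap pt' pb' lam' y = ietMap pt pb lam y ∧
      ietMap pt pb lam y ∈ Set.Ico 0 (totalLength lam') := by
  subst hcb
  have hca := (g.ne_of_last bc.bot_last bc.top_last).symm
  have hub := g.bot.utI_eq_totalLength_sub (lam := lam) bc.top_last
  have hloser := bc.utI_bot_loser g.symm
  have hc' : y ∈ Set.Ico (utI pt' lam' c) (utI pt' lam' c + lam' c) := by
    rw [bc.utI_bot_eq g.symm hca, bc.len_winner]
    exact ⟨hc.1, by linarith⟩
  rw [(bc.isAdmissible g.symm).symm.ietMap_apply hc', g.ietMap_apply hc,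
    bc.utI_bot_eq g.symm hca, bc.utI_top_eq g.symm]
  refine ⟨rfl, ?_, ?_⟩ <;>
    linarith [hc.1, hc.2, utI_nonneg (p := pb) g.pos c, bc.totalLength_eq]

theorem ietMap_eq_of_ge (hcb : c = b) (hy : utI pt' lam' a ≤ y) :
    ietMap pt' pb' lam' y = ietMap pt pb lam (ietMap pt pb lam y) ∧
      ietMap pt pb lam y ∈ Set.Ico (totalLength lam') (totalLength lam) := by
  subst hcb
  have hut := g.top.utI_eq_totalLength_sub (lam := lam) bc.bot_last
  have hub := g.bot.utI_eq_totalLength_sub (lam := lam) bc.top_last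
  have hloser := bc.utI_bot_loser g.symm
  have hya : y ∈ Set.Ico (utI pt' lam' a) (utI pt' lam' a + lam' a) := by
    rw [bc.len_of_ne a (g.ne_of_last bc.bot_last bc.top_last)]
    constructor <;> linarith [hc.2]
  have hT := g.ietMap_apply (pb := pb) hc
  have hTa : ietMap pt pb lam y ∈ Set.Ico (utI pt lam a) (utI pt lam a + lam a) := by
    constructor <;> linarith [hc.2]
  rw [(bc.isAdmissible g.symm).symm.ietMap_apply hya, g.ietMap_apply hTa, hT,
    bc.utI_top_eq g.symm, hloser]
  refine ⟨by linarith, ?_, ?_⟩ <;> linarith [hc.2, bc.totalLength_eq]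

end

theorem isFirstReturn :
    IsFirstReturn (ietMap pt pb lam) (ietMap pt' pb' lam') (totalLength lam)
      (totalLength lam') := by
  refine ⟨fun y hy => ?_, bc.mapsTo_Ico g⟩
  have hs' := bc.totalLength_eq
  obtain ⟨c, hc⟩ := g.top.exists_mem_Ico_utI ⟨hy.1, hy.2.trans
    (show totalLength lam' < totalLength lam by linarith [g.pos a])⟩
  have hca : c ≠ a := by
    rintro rfl
    linarith [hc.1, hy.2, g.top.utI_eq_totalLength_sub (lam := lam) bc.bot_last]
  by_cases hcb : c = b
  · rcases lt_or_ge y (utI pt' lam' a) with hlt | hge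
    exacts [.inl (bc.ietMap_eq_of_lt g hc hcb hlt), .inr (bc.ietMap_eq_of_ge g hc hcb hge)]
  · exact .inl (bc.ietMap_eq_of_ne g hc hca hcb)

end BotCase

namespace IETStep

variable {d : ℕ} {pt pb pt' pb' : A → ℕ} {lam lam' : A → ℝ}
  (hs : IETStep d pt pb pt' pb' lam lam') (g : IsAdmissible d pt pb lam)
include hs g

theorem totalLength_lt : totalLength lam' < totalLength lam := by
  obtain ⟨a, b, tc | bc⟩ := ietStep_iff.1 hs
  · rw [tc.totalLength_eq]; linarith [g.pos b]
  · rw [bc.totalLength_eq]; linarith [g.pos a]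

variable [DecidableEq A]

theorem isAdmissible : IsAdmissible d pt' pb' lam' := by
  obtain ⟨a, b, tc | bc⟩ := ietStep_iff.1 hs
  exacts [tc.isAdmissible g, (bc.isAdmissible g.symm).symm]

theorem isFirstReturn :
    IsFirstReturn (ietMap pt pb lam) (ietMap pt' pb' lam') (totalLength lam)
      (totalLength lam') := by
  obtain ⟨a, b, tc | bc⟩ := ietStep_iff.1 hs
  exacts [tc.isFirstReturn g, bc.isFirstReturn g]

theorem bot_eq_one_iff (z : A) : pb' z = 1 ↔ pb z = 1 := by
  obtain ⟨a, b, tc | bc⟩ := ietStep_iff.1 hs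
  exacts [tc.bot_eq_one_iff g z, by rw [bc.top_eq]]

theorem utI_bot_eq_or (z : A) : utI pb' lam' z = utI pb lam z ∨
    utI pb' lam' z = ietMap pt pb lam (utI pb lam z) := by
  obtain ⟨a, b, tc | bc⟩ := ietStep_iff.1 hs
  · rcases eq_or_ne z b with rfl | hz
    exacts [.inr (tc.utI_bot_loser_eq_ietMap g), .inl (tc.utI_bot_eq g hz)]
  · exact .inl (bc.utI_top_eq g.symm z)

theorem utI_top_eq_or (z : A) : utI pt' lam' z = utI pt lam z ∨
    ietMap pt pb lam (utI pt' lam' z) = utI pt lam z := by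
  obtain ⟨a, b, tc | bc⟩ := ietStep_iff.1 hs
  · exact .inl (tc.utI_top_eq g z)
  · rcases eq_or_ne z a with rfl | hz
    exacts [.inr (bc.ietMap_utI_top_loser g), .inl (bc.utI_bot_eq g.symm hz)]

end IETStep

section FinitePath

variable [DecidableEq A] {d K : ℕ} {pt pb : ℕ → A → ℕ} {L : ℕ → A → ℝ}
  (hst : ∀ k < K, IETStep d (pt k) (pb k) (pt (k + 1)) (pb (k + 1)) (L k) (L (k + 1)))
  (g₀ : IsAdmissible d (pt 0) (pb 0) (L 0))
include hst g₀

theorem isAdmissible_of_steps {k : ℕ} (hk : k ≤ K) : IsAdmissible d (pt k) (pb k) (L k) := by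
  induction k with
  | zero => exact g₀
  | succ k ih => exact (hst k (by omega)).isAdmissible (ih (by omega))

theorem exists_iterate_eq_of_steps {k : ℕ} (hk : k ≤ K) {x : ℝ}
    (hx : x ∈ Set.Ico 0 (totalLength (L k))) :
    ∃ N, ietMap (pt k) (pb k) (L k) x = (ietMap (pt 0) (pb 0) (L 0))^[N] x := by
  induction k generalizing x with
  | zero => exact ⟨1, rfl⟩
  | succ k ih =>
    have hs := hst k (by omega)
    have gk := isAdmissible_of_steps hst g₀ (k := k) (by omega)
    have hx' : x ∈ Set.Ico 0 (totalLength (L k)) := ⟨hx.1, hx.2.trans (hs.totalLength_lt gk)⟩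
    obtain ⟨N, hN⟩ := ih (by omega) hx'
    rcases (hs.isFirstReturn gk).apply_eq x hx with ⟨h₁, -⟩ | ⟨h₁, h₂⟩
    · exact ⟨N, h₁.trans hN⟩
    · obtain ⟨M, hM⟩ := ih (by omega) (gk.ietMap_mapsTo hx')
      exact ⟨M + N, by rw [h₁, hM, hN, Function.iterate_add_apply]⟩

theorem bot_eq_one_iff_of_steps {k : ℕ} (hk : k ≤ K) (z : A) : pb k z = 1 ↔ pb 0 z = 1 := by
  induction k with
  | zero => rfl
  | succ k ih =>
    rw [(hst k (by omega)).bot_eq_one_iff (isAdmissible_of_steps hst g₀ (by omega)) z,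
      ih (by omega)]

theorem exists_iterate_utI_bot_eq {k : ℕ} (hk : k ≤ K) (z : A) :
    ∃ i, utI (pb k) (L k) z = (ietMap (pt 0) (pb 0) (L 0))^[i] (utI (pb 0) (L 0) z) := by
  induction k with
  | zero => exact ⟨0, rfl⟩
  | succ k ih =>
    obtain ⟨i, hi⟩ := ih (by omega)
    have gk := isAdmissible_of_steps hst g₀ (k := k) (by omega)
    rcases (hst k (by omega)).utI_bot_eq_or gk z with h | h
    · exact ⟨i, h.trans hi⟩
    · obtain ⟨N, hN⟩ := exists_iterate_eq_of_steps hst g₀ (k := k) (by omega)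
        ⟨utI_nonneg gk.pos z, utI_lt_totalLength gk.pos z⟩
      exact ⟨N + i, by rw [h, hN, hi, Function.iterate_add_apply]⟩

theorem exists_iterate_utI_top_eq {k : ℕ} (hk : k ≤ K) (z : A) :
    ∃ i, (ietMap (pt 0) (pb 0) (L 0))^[i] (utI (pt k) (L k) z) = utI (pt 0) (L 0) z := by
  induction k with
  | zero => exact ⟨0, rfl⟩
  | succ k ih =>
    obtain ⟨i, hi⟩ := ih (by omega)
    have hs := hst k (by omega)
    have gk := isAdmissible_of_steps hst g₀ (k := k) (by omega)
    have gk' := hs.isAdmissible gk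
    rcases hs.utI_top_eq_or gk z with h | h
    · exact ⟨i, h ▸ hi⟩
    · obtain ⟨N, hN⟩ := exists_iterate_eq_of_steps hst g₀ (k := k) (by omega)
        ⟨utI_nonneg gk'.pos z, (utI_lt_totalLength gk'.pos z).trans (hs.totalLength_lt gk)⟩
      exact ⟨i + N, by rw [Function.iterate_add_apply, ← hN, h, hi]⟩

/-- Equal lengths of the two last letters mean `u^t_a = u^b_b` at stage `k`, and both points
lie on orbits of critical data of the initial map. -/
theorem hasConnection_of_steps {k : ℕ} (hk : k ≤ K) {a b : A} (ha : pt k a = d)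
    (hb : pb k b = d) (hab : L k a = L k b) : HasConnection (pt 0) (pb 0) (L 0) := by
  have gk := isAdmissible_of_steps hst g₀ hk
  have hcrit : utI (pt k) (L k) a = utI (pb k) (L k) b := by
    rw [gk.top.utI_eq_totalLength_sub ha, gk.bot.utI_eq_totalLength_sub hb, hab]
  have h2 := g₀.two_le
  have hb₁ := bot_eq_one_iff_of_steps hst g₀ hk b
  have ha₁ := bot_eq_one_iff_of_steps (fun j hj => (hst j hj).swap) g₀.symm hk a
  obtain ⟨p, hp⟩ := exists_iterate_utI_top_eq hst g₀ hk a
  obtain ⟨i, hi⟩ := exists_iterate_utI_bot_eq hst g₀ hk b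
  refine ⟨b, a, p + i, ?_, ?_, ?_⟩
  · have := g₀.bot.one_le b; omega
  · have := g₀.top.one_le a; omega
  · show (ietMap _ _ _)^[p + i] (utI (pb 0) (L 0) b) = _
    rw [Function.iterate_add_apply, ← hi, ← hcrit, hp]

end FinitePath

section Machine

section

variable [DecidableEq A]

/-- `f ↦ f - f l • e_w`: the new lengths when the letter `w` wins against the letter `l`. -/
def subtractEquiv (w l : A) (hne : w ≠ l) : (A → ℝ) ≃ₗ[ℝ] (A → ℝ) where
  toFun f y := if y = w then f w - f l else f y
  invFun f y := if y = w then f w + f l else f y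
  map_add' f f' := by ext y; by_cases h : y = w <;> simp [h]; ring
  map_smul' c f := by ext y; by_cases h : y = w <;> simp [h]; ring
  left_inv f := by ext y; by_cases h : y = w <;> simp [h, hne.symm]
  right_inv f := by ext y; by_cases h : y = w <;> simp [h, hne.symm]

/-- The numbering `p` with the letter `l` moved to the position right after the letter `w`. -/
def moveAfter (p : A → ℕ) (w l : A) (x : A) : ℕ :=
  if p x ≤ p w then p x else if x = l then p w + 1 else p x + 1

end

variable [Nonempty A]

/-- A junk letter if no letter has position `d`. -/
noncomputable def lastLetter (d : ℕ) (p : A → ℕ) : A :=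
  if h : ∃ a, p a = d then h.choose else Classical.arbitrary A

theorem IsNumbering.lastLetter_eq {d : ℕ} {p : A → ℕ} (hp : IsNumbering d p) (hd : 1 ≤ d) :
    p (lastLetter d p) = d := by
  have h := hp.exists_eq hd le_rfl
  rw [lastLetter, dif_pos h]
  exact h.choose_spec

variable [DecidableEq A]

/-- A combinatorial datum together with the linear map sending the initial lengths to the
current ones. -/
structure RauzyState (A : Type*) where
  top : A → ℕ
  bot : A → ℕ
  lengths : (A → ℝ) ≃ₗ[ℝ] (A → ℝ)

namespace RauzyState

variable (d : ℕ)

noncomputable def move (s : RauzyState A) (topWins : Bool) : RauzyState A :=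
  if hne : lastLetter d s.top = lastLetter d s.bot then s
  else if topWins then
    ⟨s.top, moveAfter s.bot (lastLetter d s.top) (lastLetter d s.bot),
      s.lengths.trans (subtractEquiv _ _ hne)⟩
  else
    ⟨moveAfter s.top (lastLetter d s.bot) (lastLetter d s.top), s.bot,
      s.lengths.trans (subtractEquiv _ _ (Ne.symm hne))⟩

noncomputable def ofWord (pit pib : A → ℕ) (w : List Bool) : RauzyState A :=
  w.foldl (move d) ⟨pit, pib, LinearEquiv.refl ℝ _⟩

/-- Its vanishing at `λ` blocks the next step; the junk value for degenerate states keeps it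
nonzero. -/
noncomputable def blockingForm (s : RauzyState A) : (A → ℝ) →ₗ[ℝ] ℝ :=
  if lastLetter d s.top = lastLetter d s.bot then LinearMap.proj (Classical.arbitrary A)
  else (LinearMap.proj (R := ℝ) (φ := fun _ : A => ℝ) (lastLetter d s.top) -
    LinearMap.proj (lastLetter d s.bot)) ∘ₗ s.lengths.toLinearMap

theorem blockingForm_ne_zero (s : RauzyState A) : s.blockingForm d ≠ 0 := by
  intro h
  unfold blockingForm at h
  split_ifs at h with hab
  · simpa using LinearMap.congr_fun h (Pi.single (Classical.arbitrary A) 1)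
  · simpa [Pi.single_apply, Ne.symm hab] using
      LinearMap.congr_fun h (s.lengths.symm (Pi.single (lastLetter d s.top) 1))

theorem blockingForm_apply (s : RauzyState A) (hab : lastLetter d s.top ≠ lastLetter d s.bot)
    (lam : A → ℝ) :
    s.blockingForm d lam =
      s.lengths lam (lastLetter d s.top) - s.lengths lam (lastLetter d s.bot) := by
  simp [blockingForm, hab]

def IsStep (s s' : RauzyState A) (lam : A → ℝ) : Prop :=
  IETStep d s.top s.bot s'.top s'.bot (s.lengths lam) (s'.lengths lam)

noncomputable def topWins (s : RauzyState A) (lam : A → ℝ) : Bool :=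
  decide (s.lengths lam (lastLetter d s.bot) < s.lengths lam (lastLetter d s.top))

theorem move_true (s : RauzyState A) (hab : lastLetter d s.top ≠ lastLetter d s.bot) :
    s.move d true = ⟨s.top, moveAfter s.bot (lastLetter d s.top) (lastLetter d s.bot),
      s.lengths.trans (subtractEquiv _ _ hab)⟩ := by
  rw [move, dif_neg hab, if_pos rfl]

theorem move_false (s : RauzyState A) (hab : lastLetter d s.top ≠ lastLetter d s.bot) :
    s.move d false = ⟨moveAfter s.top (lastLetter d s.bot) (lastLetter d s.top), s.bot,
      s.lengths.trans (subtractEquiv _ _ (Ne.symm hab))⟩ := by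
  rw [move, dif_neg hab, if_neg Bool.false_ne_true]

theorem isStep_move {s : RauzyState A} {lam : A → ℝ}
    (g : IsAdmissible d s.top s.bot (s.lengths lam))
    (hne : s.lengths lam (lastLetter d s.top) ≠ s.lengths lam (lastLetter d s.bot)) :
    s.IsStep d (s.move d (s.topWins d lam)) lam := by
  have hd : 1 ≤ d := by have := g.two_le; omega
  have ha := g.top.lastLetter_eq hd
  have hb := g.bot.lastLetter_eq hd
  have hab := g.ne_of_last ha hb
  refine ietStep_iff.2 ⟨lastLetter d s.top, lastLetter d s.bot, ?_⟩
  rcases lt_or_gt_of_ne hne with hlt | hlt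
  · rw [show s.topWins d lam = false from decide_eq_false (not_lt.2 hlt.le), move_false d s hab]
    refine .inr ⟨hb, ha, hlt, rfl, fun x hx => if_pos hx, ?_, fun x hx hx' => ?_, ?_, ?_⟩
    · simp [moveAfter, (g.symm.bot_lt_of_last hb ha).not_ge, ha]
    · simp [moveAfter, hx, not_le.2 hx']
    · simp [subtractEquiv]
    · intro x hx
      simp [subtractEquiv, hx]
  · rw [show s.topWins d lam = true from decide_eq_true hlt, move_true d s hab]
    refine .inl ⟨ha, hb, hlt, rfl, fun x hx => if_pos hx, ?_, fun x hx hx' => ?_, ?_, ?_⟩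
    · simp [moveAfter, (g.bot_lt_of_last ha hb).not_ge, hb]
    · simp [moveAfter, hx, not_le.2 hx']
    · simp [subtractEquiv]
    · intro x hx
      simp [subtractEquiv, hx]

noncomputable def path (pit pib : A → ℕ) (lam : A → ℝ) : ℕ → RauzyState A
  | 0 => ⟨pit, pib, LinearEquiv.refl ℝ _⟩
  | k + 1 => (path pit pib lam k).move d ((path pit pib lam k).topWins d lam)

theorem exists_path_eq_ofWord (pit pib : A → ℕ) (lam : A → ℝ) (k : ℕ) :
    ∃ w, path d pit pib lam k = ofWord d pit pib w := by
  induction k with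
  | zero => exact ⟨[], rfl⟩
  | succ k ih =>
    obtain ⟨w, hw⟩ := ih
    refine ⟨w ++ [(path d pit pib lam k).topWins d lam], ?_⟩
    rw [ofWord, List.foldl_append, ← ofWord, ← hw]
    rfl

end RauzyState

open RauzyState in
theorem admitsAllSteps_of_forall_ne {d : ℕ} {pit pib : A → ℕ} {lam : A → ℝ}
    (g₀ : IsAdmissible d pit pib lam)
    (hne : ∀ k, (∀ j < k, (path d pit pib lam j).IsStep d (path d pit pib lam (j + 1)) lam) →
      (path d pit pib lam k).lengths lam (lastLetter d (path d pit pib lam k).top) ≠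
        (path d pit pib lam k).lengths lam (lastLetter d (path d pit pib lam k).bot)) :
    AdmitsAllSteps d pit pib lam := by
  have hsteps : ∀ k, ∀ j < k, (path d pit pib lam j).IsStep d (path d pit pib lam (j + 1)) lam := by
    intro k
    induction k with
    | zero => intro j hj; omega
    | succ k ih =>
      intro j hj
      rcases Nat.lt_succ_iff_lt_or_eq.1 hj with hj | rfl
      · exact ih j hj
      · exact isStep_move d (isAdmissible_of_steps ih g₀ le_rfl) (hne j ih)
  exact ⟨fun k => (path d pit pib lam k).top, fun k => (path d pit pib lam k).bot,
    fun k => (path d pit pib lam k).lengths lam, rfl, rfl, rfl,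
    fun k => hsteps (k + 1) k (Nat.lt_succ_self k)⟩

end Machine

def ConnectsIn (pt pb : A → ℕ) (lam : A → ℝ) (β α : A) (m : ℕ) : Prop :=
  (ietMap pt pb lam)^[m] (utI pb lam β) = utI pt lam α

section Descent

variable [DecidableEq A] {d : ℕ} {pt pb pt' pb' : A → ℕ} {lam lam' : A → ℝ} {β α : A} {m : ℕ}

theorem TopCase.exists_connectsIn_le {a b : A} (tc : TopCase d pt pb pt' pb' lam lam' a b)
    (g : IsAdmissible d pt pb lam) (h : ConnectsIn pt pb lam β α m) :
    ∃ m' ≤ m, ConnectsIn pt' pb' lam' β α m' ∧ utI pt' lam' α = utI pt lam α := by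
  have g' := tc.isAdmissible g
  have hret := tc.isFirstReturn g
  have hs' := tc.totalLength_eq
  have hα : utI pt lam α < totalLength lam' := by
    linarith [g.top.utI_le_utI_last g.pos tc.top_last α,
      g.top.utI_eq_totalLength_sub (lam := lam) tc.top_last, tc.lt]
  have hut := tc.utI_top_eq g α
  by_cases hβ : β = b
  · subst hβ
    obtain ⟨j, rfl⟩ : ∃ j, m = j + 1 := Nat.exists_eq_add_one.2 <| Nat.pos_of_ne_zero <| by
      rintro rfl
      have h₀ : utI pb lam β = utI pt lam α := h
      linarith [g.bot.utI_eq_totalLength_sub (lam := lam) tc.bot_last]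
    rw [ConnectsIn, Function.iterate_succ_apply, ← tc.utI_bot_loser_eq_ietMap g] at h
    obtain ⟨r, hr, hr'⟩ := hret.exists_iterate_eq
      ⟨utI_nonneg g'.pos β, utI_lt_totalLength g'.pos β⟩ (h ▸ hα)
    exact ⟨r, by omega, by rw [ConnectsIn, hut, hr', h], hut⟩
  · have hβ' : utI pb lam β < totalLength lam' := by
      linarith [utI_add_le_of_lt (lam := lam) g.pos
          (tc.bot_last ▸ g.bot.lt_of_ne_last tc.bot_last hβ),
        g.bot.utI_eq_totalLength_sub (lam := lam) tc.bot_last, g.pos β]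
    obtain ⟨r, hr, hr'⟩ := hret.exists_iterate_eq ⟨utI_nonneg g.pos β, hβ'⟩
      ((show _ = _ from h) ▸ hα)
    exact ⟨r, hr, by rw [ConnectsIn, hut, tc.utI_bot_eq g hβ, hr', h], hut⟩

theorem BotCase.exists_connectsIn_le {a b : A} (bc : BotCase d pt pb pt' pb' lam lam' a b)
    (g : IsAdmissible d pt pb lam) (h : ConnectsIn pt pb lam β α m) :
    ∃ m' ≤ m, ConnectsIn pt' pb' lam' β α m' ∧
      (m' = m → utI pt' lam' α = utI pt lam α) := by
  have g' := (bc.isAdmissible g.symm).symm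
  have hret := bc.isFirstReturn g
  have hs' := bc.totalLength_eq
  have hut := g.top.utI_eq_totalLength_sub (lam := lam) bc.bot_last
  have hβ : utI pb lam β < totalLength lam' := by
    linarith [g.bot.utI_le_utI_last g.pos bc.top_last β,
      g.bot.utI_eq_totalLength_sub (lam := lam) bc.top_last, bc.lt]
  have hy : utI pb lam β ∈ Set.Ico 0 (totalLength lam') := ⟨utI_nonneg g.pos β, hβ⟩
  unfold ConnectsIn
  rw [bc.utI_top_eq g.symm β]
  by_cases hα : α = a
  · subst hα
    obtain ⟨j, rfl⟩ : ∃ j, m = j + 1 := Nat.exists_eq_add_one.2 <| Nat.pos_of_ne_zero <| by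
      rintro rfl
      have h₀ : utI pb lam β = utI pt lam α := h
      linarith
    have hα' : utI pt' lam' α < totalLength lam' := utI_lt_totalLength g'.pos α
    have hj : (ietMap pt pb lam)^[j] (utI pb lam β) = utI pt' lam' α := by
      refine g.ietMap_injOn (g.ietMap_mapsTo.iterate j ⟨hy.1, hy.2.trans ?_⟩)
        ⟨utI_nonneg g'.pos α, hα'.trans ?_⟩ ?_
      · linarith [g.pos α]
      · linarith [g.pos α]
      · rw [bc.ietMap_utI_top_loser g, ← Function.iterate_succ_apply' (ietMap pt pb lam)]
        exact h
    obtain ⟨r, hr, hr'⟩ := hret.exists_iterate_eq hy (hj ▸ hα')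
    exact ⟨r, by omega, hr'.trans hj, by omega⟩
  · have hα' : utI pt lam α < totalLength lam' := by
      linarith [utI_add_le_of_lt (lam := lam) g.pos
          (bc.bot_last ▸ g.top.lt_of_ne_last bc.bot_last hα), g.pos α]
    obtain ⟨r, hr, hr'⟩ := hret.exists_iterate_eq hy ((show _ = _ from h) ▸ hα')
    have hut' := bc.utI_bot_eq g.symm hα
    exact ⟨r, hr, by rw [hut', hr', h], fun _ => hut'⟩

theorem IETStep.exists_connectsIn_le (hs : IETStep d pt pb pt' pb' lam lam')
    (g : IsAdmissible d pt pb lam) (h : ConnectsIn pt pb lam β α m) :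
    ∃ m' ≤ m, ConnectsIn pt' pb' lam' β α m' ∧
      (m' = m → utI pt' lam' α = utI pt lam α) := by
  obtain ⟨a, b, tc | bc⟩ := ietStep_iff.1 hs
  · obtain ⟨m', hm', h', hut⟩ := tc.exists_connectsIn_le g h
    exact ⟨m', hm', h', fun _ => hut⟩
  · exact bc.exists_connectsIn_le g h

end Descent

theorem eventually_forall_ge_eq_of_le_succ {f : ℕ → ℕ} {B : ℕ}
    (hf : ∀ᶠ k in Filter.atTop, f k ≤ f (k + 1)) (hB : ∀ k, f k ≤ B) :
    ∀ᶠ K in Filter.atTop, ∀ k ≥ K, f k = f K := by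
  obtain ⟨K₀, hK₀⟩ := Filter.eventually_atTop.1 hf
  have hanti : Antitone fun j => B - f (K₀ + j) :=
    antitone_nat_of_succ_le fun j => Nat.sub_le_sub_left (hK₀ (K₀ + j) (by omega)) B
  obtain ⟨N, hN⟩ := WellFoundedLT.antitone_chain_condition hanti
  have hconst : ∀ k ≥ K₀ + N, f k = f (K₀ + N) := fun k hk => by
    have := hN (k - K₀) (by omega)
    rw [show K₀ + (k - K₀) = k by omega] at this
    have := hB k
    have := hB (K₀ + N)
    omega
  exact Filter.eventually_atTop.2 ⟨K₀ + N, fun K hK k hk =>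
    (hconst k (hK.trans hk)).trans (hconst K hK).symm⟩

structure RauzyPath (A : Type*) [Fintype A] (d : ℕ) where
  top : ℕ → A → ℕ
  bot : ℕ → A → ℕ
  len : ℕ → A → ℝ
  isAdmissible_zero : IsAdmissible d (top 0) (bot 0) (len 0)
  step : ∀ k, IETStep d (top k) (bot k) (top (k + 1)) (bot (k + 1)) (len k) (len (k + 1))

namespace RauzyPath

open Filter

variable [DecidableEq A] {d : ℕ} (γ : RauzyPath A d)

theorem isAdmissible (k : ℕ) : IsAdmissible d (γ.top k) (γ.bot k) (γ.len k) :=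
  isAdmissible_of_steps (K := k) (fun j _ => γ.step j) γ.isAdmissible_zero le_rfl

def swap : RauzyPath A d :=
  ⟨γ.bot, γ.top, γ.len, γ.isAdmissible_zero.symm, fun k => (γ.step k).swap⟩

theorem bot_eq_one_iff (k : ℕ) (z : A) : γ.bot k z = 1 ↔ γ.bot 0 z = 1 :=
  bot_eq_one_iff_of_steps (K := k) (fun j _ => γ.step j) γ.isAdmissible_zero le_rfl z

theorem totalLength_antitone : Antitone fun k => totalLength (γ.len k) :=
  antitone_nat_of_succ_le fun k => ((γ.step k).totalLength_lt (γ.isAdmissible k)).le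

theorem totalLength_nonneg (k : ℕ) : 0 ≤ totalLength (γ.len k) :=
  Finset.sum_nonneg fun z _ => ((γ.isAdmissible k).pos z).le

theorem top_eq_one_iff (k : ℕ) (z : A) : γ.top k z = 1 ↔ γ.top 0 z = 1 :=
  γ.swap.bot_eq_one_iff k z

/-- Along the induction a connection only gets shorter, so it eventually stops changing and
from then on the critical point `u^t_α` stays put. -/
theorem exists_forall_ge_utI_eq {β α : A} {n : ℕ}
    (h : ConnectsIn (γ.top 0) (γ.bot 0) (γ.len 0) β α n) :
    ∃ N, ∀ k ≥ N, utI (γ.top k) (γ.len k) α = utI (γ.top N) (γ.len N) α := by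
  classical
  have hconn : ∀ k, ∃ m, ConnectsIn (γ.top k) (γ.bot k) (γ.len k) β α m := by
    intro k
    induction k with
    | zero => exact ⟨n, h⟩
    | succ k ih =>
      obtain ⟨m, hm⟩ := ih
      obtain ⟨m', -, hm', -⟩ := (γ.step k).exists_connectsIn_le (γ.isAdmissible k) hm
      exact ⟨m', hm'⟩
  have hstep := fun k => (γ.step k).exists_connectsIn_le (γ.isAdmissible k)
    (Nat.find_spec (hconn k))
  have hanti : Antitone fun k => Nat.find (hconn k) := antitone_nat_of_succ_le fun k => by
    obtain ⟨m', hm', h', -⟩ := hstep k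
    exact (Nat.find_min' _ h').trans hm'
  obtain ⟨N, hN⟩ := WellFoundedLT.antitone_chain_condition hanti
  refine ⟨N, fun k hk => ?_⟩
  induction k, hk using Nat.le_induction with
  | base => rfl
  | succ k hk ih =>
    obtain ⟨m', hm', h', hut⟩ := hstep k
    have hmin := Nat.find_min' (hconn (k + 1)) h'
    have hNk := hN k hk
    have hNk' := hN (k + 1) (by omega)
    exact (hut (by omega)).trans ih

theorem exists_forall_lt_totalLength {β α : A} {n : ℕ}
    (h : ConnectsIn (γ.top 0) (γ.bot 0) (γ.len 0) β α n) (hα : 2 ≤ γ.top 0 α) :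
    ∃ y > 0, ∀ k, y < totalLength (γ.len k) := by
  obtain ⟨N, hN⟩ := γ.exists_forall_ge_utI_eq h
  have hαN : 2 ≤ γ.top N α := by
    have := γ.top_eq_one_iff N α
    have := (γ.isAdmissible N).top.one_le α
    omega
  refine ⟨_, (γ.isAdmissible N).top.utI_pos (γ.isAdmissible N).pos hαN, fun k => ?_⟩
  rcases le_total N k with hk | hk
  · exact hN k hk ▸ utI_lt_totalLength (γ.isAdmissible k).pos α
  · exact (utI_lt_totalLength (γ.isAdmissible N).pos α).trans_le (γ.totalLength_antitone hk)

variable [Nonempty A]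

noncomputable def topLast (k : ℕ) : A := lastLetter d (γ.top k)

noncomputable def botLast (k : ℕ) : A := lastLetter d (γ.bot k)

def IsTop (k : ℕ) : Prop := γ.len k (γ.botLast k) < γ.len k (γ.topLast k)

open Classical in
noncomputable def winner (k : ℕ) : A := if γ.IsTop k then γ.topLast k else γ.botLast k

open Classical in
noncomputable def loser (k : ℕ) : A := if γ.IsTop k then γ.botLast k else γ.topLast k

theorem top_topLast (k : ℕ) : γ.top k (γ.topLast k) = d :=
  (γ.isAdmissible k).top.lastLetter_eq (by have := (γ.isAdmissible k).two_le; omega)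

theorem bot_botLast (k : ℕ) : γ.bot k (γ.botLast k) = d :=
  (γ.isAdmissible k).bot.lastLetter_eq (by have := (γ.isAdmissible k).two_le; omega)

theorem topCase_or_botCase (k : ℕ) :
    TopCase d (γ.top k) (γ.bot k) (γ.top (k + 1)) (γ.bot (k + 1)) (γ.len k) (γ.len (k + 1))
      (γ.topLast k) (γ.botLast k) ∨
    BotCase d (γ.top k) (γ.bot k) (γ.top (k + 1)) (γ.bot (k + 1)) (γ.len k) (γ.len (k + 1))
      (γ.topLast k) (γ.botLast k) := by
  obtain ⟨a, b, h⟩ := ietStep_iff.1 (γ.step k)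
  have ha : a = γ.topLast k := (γ.isAdmissible k).top.injective <| by
    rw [γ.top_topLast]; rcases h with h | h; exacts [h.top_last, h.bot_last]
  have hb : b = γ.botLast k := (γ.isAdmissible k).bot.injective <| by
    rw [γ.bot_botLast]; rcases h with h | h; exacts [h.bot_last, h.top_last]
  exact ha ▸ hb ▸ h

theorem topCase {k : ℕ} (h : γ.IsTop k) :
    TopCase d (γ.top k) (γ.bot k) (γ.top (k + 1)) (γ.bot (k + 1)) (γ.len k) (γ.len (k + 1))
      (γ.topLast k) (γ.botLast k) :=
  (γ.topCase_or_botCase k).resolve_right fun bc => lt_asymm bc.lt h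

theorem botCase {k : ℕ} (h : ¬ γ.IsTop k) :
    BotCase d (γ.top k) (γ.bot k) (γ.top (k + 1)) (γ.bot (k + 1)) (γ.len k) (γ.len (k + 1))
      (γ.topLast k) (γ.botLast k) :=
  (γ.topCase_or_botCase k).resolve_left fun tc => h tc.lt

theorem swap_isTop (k : ℕ) : γ.swap.IsTop k ↔ ¬ γ.IsTop k :=
  ⟨fun h h' => lt_asymm h h', fun h => (γ.botCase h).lt⟩

theorem swap_winner (k : ℕ) : γ.swap.winner k = γ.winner k := by
  by_cases h : γ.IsTop k
  · rw [winner, winner, if_neg ((γ.swap_isTop k).not.2 (not_not.2 h)), if_pos h]; rfl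
  · rw [winner, winner, if_pos ((γ.swap_isTop k).2 h), if_neg h]; rfl

theorem swap_loser (k : ℕ) : γ.swap.loser k = γ.loser k := by
  by_cases h : γ.IsTop k
  · rw [loser, loser, if_neg ((γ.swap_isTop k).not.2 (not_not.2 h)), if_pos h]; rfl
  · rw [loser, loser, if_pos ((γ.swap_isTop k).2 h), if_neg h]; rfl

theorem loser_ne_winner (k : ℕ) : γ.loser k ≠ γ.winner k := by
  have hne := (γ.isAdmissible k).ne_of_last (γ.top_topLast k) (γ.bot_botLast k)
  unfold loser winner
  split_ifs
  exacts [hne.symm, hne]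

theorem len_succ_of_ne {k : ℕ} {z : A} (hz : z ≠ γ.winner k) :
    γ.len (k + 1) z = γ.len k z := by
  unfold winner at hz
  split_ifs at hz with h
  exacts [(γ.topCase h).len_of_ne z hz, (γ.botCase h).len_of_ne z hz]

theorem totalLength_succ (k : ℕ) :
    totalLength (γ.len (k + 1)) = totalLength (γ.len k) - γ.len k (γ.loser k) := by
  unfold loser
  split_ifs with h
  exacts [(γ.topCase h).totalLength_eq, (γ.botCase h).totalLength_eq]

theorem len_antitone (z : A) : Antitone fun k => γ.len k z := by
  refine antitone_nat_of_succ_le fun k => ?_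
  by_cases hz : z = γ.winner k
  · unfold winner at hz
    split_ifs at hz with h
    · rw [hz, (γ.topCase h).len_winner]; linarith [(γ.isAdmissible k).pos (γ.botLast k)]
    · rw [hz, (γ.botCase h).len_winner]; linarith [(γ.isAdmissible k).pos (γ.topLast k)]
  · exact (γ.len_succ_of_ne hz).le

theorem top_succ_of_isTop {k : ℕ} (h : γ.IsTop k) : γ.top (k + 1) = γ.top k :=
  (γ.topCase h).top_eq

theorem top_le_top_succ {k : ℕ} {z : A} (hz : z ≠ γ.loser k) :
    γ.top k z ≤ γ.top (k + 1) z := by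
  by_cases h : γ.IsTop k
  · rw [γ.top_succ_of_isTop h]
  · have bc := γ.botCase h
    rw [loser, if_neg h] at hz
    rw [bc.bot_eq_ite]
    split_ifs <;> omega

theorem top_succ_of_lt {k : ℕ} {z : A} (h : ¬ γ.IsTop k) (hz : z ≠ γ.loser k)
    (hlt : γ.top k (γ.winner k) < γ.top k z) : γ.top (k + 1) z = γ.top k z + 1 := by
  rw [loser, if_neg h] at hz
  rw [winner, if_neg h] at hlt
  exact (γ.botCase h).bot_of_gt z hz hlt

theorem top_succ_loser {k : ℕ} (h : ¬ γ.IsTop k) :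
    γ.top (k + 1) (γ.loser k) = γ.top k (γ.winner k) + 1 := by
  rw [loser, winner, if_neg h, if_neg h]
  exact (γ.botCase h).bot_loser

theorem tendsto_len_loser : Tendsto (fun k => γ.len k (γ.loser k)) atTop (nhds 0) := by
  have hlim := tendsto_atTop_ciInf γ.totalLength_antitone
    ⟨0, Set.forall_mem_range.2 γ.totalLength_nonneg⟩
  have := hlim.sub (hlim.comp (tendsto_add_atTop_nat 1))
  rw [sub_self] at this
  refine this.congr fun k => ?_
  simp only [Function.comp, γ.totalLength_succ k]
  ring

theorem tendsto_len_of_frequently_loser {z : A} (h : ∃ᶠ k in atTop, γ.loser k = z) :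
    Tendsto (fun k => γ.len k z) atTop (nhds 0) := by
  have hlim := tendsto_atTop_ciInf (γ.len_antitone z)
    ⟨0, Set.forall_mem_range.2 fun k => ((γ.isAdmissible k).pos z).le⟩
  suffices hinf : ⨅ k, γ.len k z = 0 from hinf ▸ hlim
  refine le_antisymm (not_lt.1 fun hpos => ?_)
    (le_ciInf fun k => ((γ.isAdmissible k).pos z).le)
  obtain ⟨k, hk, hsmall⟩ := (h.and_eventually (γ.tendsto_len_loser.eventually_lt_const hpos)).exists
  rw [hk] at hsmall
  exact (ciInf_le ⟨0, Set.forall_mem_range.2 fun k => ((γ.isAdmissible k).pos z).le⟩ k).not_gt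
    hsmall

theorem frequently_not_isTop : ∃ᶠ k in atTop, ¬ γ.IsTop k := by
  intro hev
  simp only [not_not] at hev
  obtain ⟨K, hK⟩ := eventually_atTop.1 hev
  have htop : ∀ k ≥ K, γ.top k = γ.top K := fun k hk => by
    induction k, hk using Nat.le_induction with
    | base => rfl
    | succ k hk ih => exact (γ.top_succ_of_isTop (hK k hk)).trans ih
  have hwin : ∀ k ≥ K, γ.winner k = γ.topLast K := fun k hk => by
    rw [winner, if_pos (hK k hk), topLast, htop k hk, topLast]
  have hlen : ∀ k ≥ K, ∀ z ≠ γ.topLast K, γ.len k z = γ.len K z := fun k hk z hz => by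
    induction k, hk using Nat.le_induction with
    | base => rfl
    | succ k hk ih => exact (γ.len_succ_of_ne (hwin k hk ▸ hz)).trans ih
  obtain ⟨z₀, -, hz₀⟩ := Finset.exists_min_image Finset.univ (γ.len K) Finset.univ_nonempty
  obtain ⟨k, hsmall⟩ := eventually_atTop.1
    (γ.tendsto_len_loser.eventually_lt_const ((γ.isAdmissible K).pos z₀))
  have hloser : γ.loser (max k K) ≠ γ.topLast K := hwin _ (le_max_right _ _) ▸ γ.loser_ne_winner _
  have := hsmall (max k K) (le_max_left _ _)
  rw [hlen _ (le_max_right _ _) _ hloser] at this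
  exact (hz₀ _ (Finset.mem_univ _)).not_gt this

theorem exists_loser_eq_winner {k : ℕ} (hk : γ.IsTop k) : ∃ k' ≥ k, γ.loser k' = γ.winner k := by
  classical
  have hex : ∃ j, k ≤ j ∧ ¬ γ.IsTop j := γ.frequently_not_isTop.forall_exists_of_atTop k
  have htop : ∀ j, k ≤ j → j ≤ Nat.find hex → γ.top j = γ.top k := fun j hj => by
    induction j, hj using Nat.le_induction with
    | base => intro _; rfl
    | succ j hj ih =>
      intro hjf
      exact (γ.top_succ_of_isTop (not_not.1 fun h => Nat.find_min hex (by omega) ⟨hj, h⟩)).trans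
        (ih (by omega))
  obtain ⟨hk', hbot⟩ := Nat.find_spec hex
  refine ⟨Nat.find hex, hk', ?_⟩
  rw [loser, if_neg hbot, winner, if_pos hk, topLast, htop _ hk' le_rfl, topLast]

theorem frequently_loser_of_frequently_winner {z : A} (h : ∃ᶠ k in atTop, γ.winner k = z) :
    ∃ᶠ k in atTop, γ.loser k = z := by
  refine frequently_atTop.2 fun K => ?_
  obtain ⟨k, hk, rfl⟩ := h.forall_exists_of_atTop K
  by_cases htop : γ.IsTop k
  · obtain ⟨k', hk', h'⟩ := γ.exists_loser_eq_winner htop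
    exact ⟨k', hk.trans hk', h'⟩
  · obtain ⟨k', hk', h'⟩ := γ.swap.exists_loser_eq_winner ((γ.swap_isTop k).2 htop)
    exact ⟨k', hk.trans hk', by rw [← γ.swap_loser, h', γ.swap_winner]⟩

theorem frequently_winner_of_frequently_loser {z : A} (h : ∃ᶠ k in atTop, γ.loser k = z) :
    ∃ᶠ k in atTop, γ.winner k = z := by
  intro hev
  obtain ⟨K, hK⟩ := eventually_atTop.1 hev
  have hlen : ∀ k ≥ K, γ.len k z = γ.len K z := fun k hk => by
    induction k, hk using Nat.le_induction with
    | base => rfl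
    | succ k hk ih => exact (γ.len_succ_of_ne fun h => hK k hk h.symm).trans ih
  obtain ⟨k, hsmall⟩ := eventually_atTop.1
    ((γ.tendsto_len_of_frequently_loser h).eventually_lt_const ((γ.isAdmissible K).pos z))
  have := hsmall (max k K) (le_max_left _ _)
  rw [hlen _ (le_max_right _ _)] at this
  exact lt_irrefl _ this

def IsActive (z : A) : Prop := ∃ᶠ k in atTop, γ.winner k = z ∨ γ.loser k = z

theorem IsActive.frequently_winner {γ : RauzyPath A d} {z : A} (h : γ.IsActive z) :
    ∃ᶠ k in atTop, γ.winner k = z :=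
  (frequently_or_distrib.1 h).elim id γ.frequently_winner_of_frequently_loser

theorem IsActive.tendsto_len {γ : RauzyPath A d} {z : A} (h : γ.IsActive z) :
    Tendsto (fun k => γ.len k z) atTop (nhds 0) :=
  γ.tendsto_len_of_frequently_loser (γ.frequently_loser_of_frequently_winner h.frequently_winner)

def FrozenFrom (z : A) (K : ℕ) : Prop :=
  ∀ k ≥ K, γ.winner k ≠ z ∧ γ.loser k ≠ z ∧ γ.top k z = γ.top K z ∧ γ.bot k z = γ.bot K z

theorem FrozenFrom.swap {γ : RauzyPath A d} {z : A} {K : ℕ} (h : γ.FrozenFrom z K) :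
    γ.swap.FrozenFrom z K := fun k hk => by
  obtain ⟨h₁, h₂, h₃, h₄⟩ := h k hk
  exact ⟨γ.swap_winner k ▸ h₁, γ.swap_loser k ▸ h₂, h₄, h₃⟩

theorem eventually_frozenFrom {z : A} (hz : ¬ γ.IsActive z) :
    ∀ᶠ K in atTop, γ.FrozenFrom z K := by
  have hidle := not_frequently.1 hz
  have htop := eventually_forall_ge_eq_of_le_succ (B := d) (f := fun k => γ.top k z)
    (hidle.mono fun k hk => γ.top_le_top_succ fun h => hk (.inr h.symm))
    fun k => (γ.isAdmissible k).top.le z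
  have hbot := eventually_forall_ge_eq_of_le_succ (B := d) (f := fun k => γ.bot k z)
    (hidle.mono fun k hk => γ.swap.top_le_top_succ fun h => hk (.inr (γ.swap_loser k ▸ h).symm))
    fun k => (γ.isAdmissible k).bot.le z
  filter_upwards [eventually_forall_ge_atTop.2 hidle, htop, hbot] with K hK h₁ h₂ k hk
  exact ⟨fun h => hK k hk (.inl h), fun h => hK k hk (.inr h), h₁ k hk, h₂ k hk⟩

theorem FrozenFrom.top_lt_top_winner {γ : RauzyPath A d} {z : A} {K k : ℕ}
    (hz : γ.FrozenFrom z K) (hk : K ≤ k) : γ.top K z < γ.top k (γ.winner k) := by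
  obtain ⟨hw, hl, ht, -⟩ := hz k hk
  rw [← ht]
  by_cases h : γ.IsTop k
  · rw [winner, if_pos h] at hw ⊢
    rw [γ.top_topLast]
    exact (γ.isAdmissible k).top.lt_of_ne_last (γ.top_topLast k) hw.symm
  · refine lt_of_not_ge fun hle => ?_
    have hlt := lt_of_le_of_ne hle fun h => hw ((γ.isAdmissible k).top.injective h)
    have hmoved := γ.top_succ_of_lt h hl.symm hlt
    have hfrozen := (hz (k + 1) (by omega)).2.2.1
    omega

theorem FrozenFrom.top_lt_top_succ {γ : RauzyPath A d} {z w : A} {K k : ℕ}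
    (hz : γ.FrozenFrom z K) (hk : K ≤ k) (hw : γ.top K z < γ.top k w) :
    γ.top K z < γ.top (k + 1) w := by
  by_cases hwl : w = γ.loser k
  · by_cases h : γ.IsTop k
    · rwa [γ.top_succ_of_isTop h]
    · rw [hwl, γ.top_succ_loser h]
      exact (hz.top_lt_top_winner hk).trans (Nat.lt_succ_self _)
  · exact hw.trans_le (γ.top_le_top_succ hwl)

theorem FrozenFrom.eventually_top_lt {γ : RauzyPath A d} {z w : A} {K : ℕ}
    (hz : γ.FrozenFrom z K) (hw : ∃ᶠ k in atTop, γ.winner k = w) :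
    ∀ᶠ k in atTop, γ.top K z < γ.top k w := by
  obtain ⟨k₀, hk₀, rfl⟩ := hw.forall_exists_of_atTop K
  refine eventually_atTop.2 ⟨k₀, fun k hk => ?_⟩
  induction k, hk using Nat.le_induction with
  | base => exact hz.top_lt_top_winner hk₀
  | succ k hk ih => exact hz.top_lt_top_succ (hk₀.trans hk) ih

theorem swap_isActive (z : A) : γ.swap.IsActive z ↔ γ.IsActive z := by
  simp only [IsActive, swap_winner, swap_loser]

theorem exists_not_isActive {y : ℝ} (hy : 0 < y) (hbound : ∀ k, y ≤ totalLength (γ.len k)) :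
    ∃ z, ¬ γ.IsActive z := by
  by_contra! hall
  have hlim := tendsto_finsetSum Finset.univ fun z _ => (hall z).tendsto_len
  rw [Finset.sum_const_zero] at hlim
  obtain ⟨k, hk⟩ := (hlim.eventually_lt_const hy).exists
  exact (hbound k).not_gt hk

/-- Once the letters of `P` are frozen and all other letters are active, the others eventually
overtake the last top position of `P`. -/
theorem eventually_top_le_iff {P : Finset A} {K : ℕ} (hK : ∀ z ∈ P, γ.FrozenFrom z K)
    (hP : ∀ w ∉ P, γ.IsActive w) {zt : A} (hzt : zt ∈ P)
    (hmax : ∀ z ∈ P, γ.top K z ≤ γ.top K zt) :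
    ∀ᶠ k in atTop, ∀ z, γ.top k z ≤ γ.top K zt ↔ z ∈ P := by
  have hev : ∀ᶠ k in atTop, ∀ w ∈ Pᶜ, γ.top K zt < γ.top k w :=
    (eventually_all_finset Pᶜ).2 fun w hw =>
      (hK zt hzt).eventually_top_lt (hP w (Finset.mem_compl.1 hw)).frequently_winner
  filter_upwards [hev, eventually_ge_atTop K] with k hk hkK z
  exact ⟨fun h => by_contra fun hz => (hk z (Finset.mem_compl.2 hz)).not_ge h,
    fun hz => ((hK z hz) k hkK).2.2.1 ▸ hmax z hz⟩

theorem exists_totalLength_lt {y : ℝ} (hy : 0 < y) : ∃ k, totalLength (γ.len k) < y := by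
  classical
  by_contra! hbound
  set P := Finset.univ.filter fun z => ¬ γ.IsActive z
  have hP : ∀ w ∉ P, γ.IsActive w := fun w hw => by simpa [P] using hw
  obtain ⟨z₀, hz₀⟩ := γ.exists_not_isActive hy hbound
  have hPne : P.Nonempty := ⟨z₀, by simpa [P] using hz₀⟩
  obtain ⟨K, hK⟩ := ((eventually_all_finset P).2 fun z hz =>
    γ.eventually_frozenFrom (Finset.mem_filter.1 hz).2).exists
  obtain ⟨zt, hzt, hzt_max⟩ := P.exists_max_image (γ.top K) hPne
  obtain ⟨zb, hzb, hzb_max⟩ := P.exists_max_image (γ.bot K) hPne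
  obtain ⟨k, ⟨htop, hbot⟩, hkK⟩ := (((γ.eventually_top_le_iff hK hP hzt hzt_max).and
    (γ.swap.eventually_top_le_iff (fun z hz => (hK z hz).swap)
      (fun w hw => (γ.swap_isActive w).2 (hP w hw)) hzb hzb_max)).and
    (eventually_ge_atTop K)).exists
  have hlt := (hK zt hzt).top_lt_top_winner hkK
  have hle := (γ.isAdmissible k).top.le (γ.winner k)
  exact (γ.isAdmissible k).false_of_initial_segments ((γ.isAdmissible K).top.one_le zt)
    (by omega) ((γ.isAdmissible K).bot.le zb) htop hbot

end RauzyPath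

section MainDirections

variable [DecidableEq A] {d : ℕ} {pit pib : A → ℕ} {lam : A → ℝ}

theorem not_hasConnection_of_admitsAllSteps (g₀ : IsAdmissible d pit pib lam)
    (h : AdmitsAllSteps d pit pib lam) : ¬ HasConnection pit pib lam := by
  have := g₀.nonempty
  obtain ⟨pt, pb, L, rfl, rfl, rfl, hst⟩ := h
  rintro ⟨β, α, n, -, hα, hconn⟩
  let γ : RauzyPath A d := ⟨pt, pb, L, g₀, hst⟩
  obtain ⟨y, hy, hbound⟩ := γ.exists_forall_lt_totalLength hconn hα
  obtain ⟨k, hk⟩ := γ.exists_totalLength_lt hy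
  exact lt_asymm hk (hbound k)

theorem admitsAllSteps_of_not_hasConnection (g₀ : IsAdmissible d pit pib lam)
    (h : ¬ HasConnection pit pib lam) : AdmitsAllSteps d pit pib lam := by
  have := g₀.nonempty
  have hd : 1 ≤ d := by have := g₀.two_le; omega
  refine admitsAllSteps_of_forall_ne g₀ fun k hsteps heq => h ?_
  have gk := isAdmissible_of_steps hsteps g₀ le_rfl
  exact hasConnection_of_steps hsteps g₀ le_rfl (gk.top.lastLetter_eq hd)
    (gk.bot.lastLetter_eq hd) heq

theorem admitsAllSteps_of_blockingForm_ne [Nonempty A] (g₀ : IsAdmissible d pit pib lam)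
    (h : ∀ w, (RauzyState.ofWord d pit pib w).blockingForm d lam ≠ 0) :
    AdmitsAllSteps d pit pib lam := by
  have hd : 1 ≤ d := by have := g₀.two_le; omega
  refine admitsAllSteps_of_forall_ne g₀ fun k hsteps heq => ?_
  have gk := isAdmissible_of_steps hsteps g₀ le_rfl
  obtain ⟨w, hw⟩ := RauzyState.exists_path_eq_ofWord d pit pib lam k
  have hab := gk.ne_of_last (gk.top.lastLetter_eq hd) (gk.bot.lastLetter_eq hd)
  apply h w
  rw [← hw, RauzyState.blockingForm_apply d _ hab, heq, sub_self]

end MainDirections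

end KeaneIET

namespace KeaneIET

variable {A : Type*} [Fintype A] [DecidableEq A]

/-- (Keane.)  An IET `T(π,λ)` admits every step of Rauzy induction if and only
if it has no connections.  In particular, there is a countable family of
hyperplanes in `ℝ₊^𝒜` outside of which every `T(π,λ)` is infinitely
renormalizable. -/
theorem infinitely_renormalizable_iff_no_connection
    (h2 : 2 ≤ Fintype.card A)
    (pit pib : A → ℕ)
    (hpit : Set.BijOn pit Set.univ (Set.Ico 1 (Fintype.card A + 1)))
    (hpib : Set.BijOn pib Set.univ (Set.Ico 1 (Fintype.card A + 1)))
    (hadm : ∀ k : ℕ, 1 ≤ k → k < Fintype.card A →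
      {a : A | pit a ≤ k} ≠ {a : A | pib a ≤ k}) :
    (∀ lam : A → ℝ, (∀ x, 0 < lam x) →
      (AdmitsAllSteps (Fintype.card A) pit pib lam ↔
        ¬ HasConnection pit pib lam)) ∧
    (∃ S : ℕ → ((A → ℝ) →ₗ[ℝ] ℝ), (∀ n, S n ≠ 0) ∧
      ∀ lam : A → ℝ, (∀ x, 0 < lam x) → (∀ n, S n lam ≠ 0) →
        AdmitsAllSteps (Fintype.card A) pit pib lam) := by
  have g₀ : ∀ lam : A → ℝ, (∀ x, 0 < lam x) → IsAdmissible (Fintype.card A) pit pib lam :=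
    fun lam hpos => .of_bijOn h2 hpit hpib hadm hpos
  have : Nonempty A := Fintype.card_pos_iff.1 (by omega)
  refine ⟨fun lam hpos => ⟨not_hasConnection_of_admitsAllSteps (g₀ lam hpos),
    admitsAllSteps_of_not_hasConnection (g₀ lam hpos)⟩, ?_⟩
  let form : List Bool → (A → ℝ) →ₗ[ℝ] ℝ := fun w =>
    (RauzyState.ofWord (Fintype.card A) pit pib w).blockingForm (Fintype.card A)
  refine ⟨fun n => form ((Encodable.decode n).getD []),
    fun n => RauzyState.blockingForm_ne_zero _ _,
    fun lam hpos hS => admitsAllSteps_of_blockingForm_ne (g₀ lam hpos) fun w => ?_⟩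
  simpa [form, Encodable.encodek] using hS (Encodable.encode w)

end KeaneIET
end

section
/- For every d ≥ 2, the hyperelliptic Rauzy class (the Rauzy class of the combinatorial datum π with π_t(α) + π_b(α) = d + 1 for all α) contains a cyclic combinatorial datum, i.e., a datum π* for which σ(π*) = π*_b ∘ (π*_t)⁻¹ is a cyclic permutation of {1,…,d} of order d. -/
/-!
Starting from the hyperelliptic datum, apply `R^t` and `R^b` alternately, `d - 2` times in all.
Each move post-composes one row with the cycle of the positions after the partner of the last
letter, and in terms of the initial top position the rows after `2m` moves are explicit
piecewise-linear functions (`stageTop`, `stageBot`). After `d - 2` moves the bottom row is the top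
row precomposed with `i ↦ i + 1 mod d`, so `σ(π*)` is conjugate to `finRotate d`, a `d`-cycle.
-/

namespace RauzyHyp

variable {A : Type*} [Fintype A] [DecidableEq A]

/-- Top Rauzy operation relation between combinatorial data `(πt, πb)` and
`(πt', πb')` (positions are 0-indexed, so the last position is `d - 1`). -/
def TopRel {d : ℕ} (P Q : (A ≃ Fin d) × (A ≃ Fin d)) : Prop :=
  ∃ αt αb : A, (P.1 αt : ℕ) = d - 1 ∧ (P.2 αb : ℕ) = d - 1 ∧
    Q.1 = P.1 ∧
    (∀ χ : A, (P.2 χ : ℕ) ≤ (P.2 αt : ℕ) → (Q.2 χ : ℕ) = (P.2 χ : ℕ)) ∧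
    (Q.2 αb : ℕ) = (P.2 αt : ℕ) + 1 ∧
    (∀ χ : A, χ ≠ αb → (P.2 αt : ℕ) < (P.2 χ : ℕ) → (Q.2 χ : ℕ) = (P.2 χ : ℕ) + 1)

/-- Bottom Rauzy operation relation between combinatorial data. -/
def BotRel {d : ℕ} (P Q : (A ≃ Fin d) × (A ≃ Fin d)) : Prop :=
  ∃ αt αb : A, (P.1 αt : ℕ) = d - 1 ∧ (P.2 αb : ℕ) = d - 1 ∧
    Q.2 = P.2 ∧
    (∀ χ : A, (P.1 χ : ℕ) ≤ (P.1 αb : ℕ) → (Q.1 χ : ℕ) = (P.1 χ : ℕ)) ∧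
    (Q.1 αt : ℕ) = (P.1 αb : ℕ) + 1 ∧
    (∀ χ : A, χ ≠ αt → (P.1 αb : ℕ) < (P.1 χ : ℕ) → (Q.1 χ : ℕ) = (P.1 χ : ℕ) + 1)

/-- One elementary Rauzy operation (`R^t` or `R^b`). -/
def StepRel {d : ℕ} (P Q : (A ≃ Fin d) × (A ≃ Fin d)) : Prop :=
  TopRel P Q ∨ BotRel P Q

end RauzyHyp

namespace RauzyHyp

open Equiv Fin

section RauzyMoves

variable {A : Type*}

theorem botRel_iff_topRel_swap {d : ℕ} {P Q : (A ≃ Fin d) × (A ≃ Fin d)} :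
    BotRel P Q ↔ TopRel P.swap Q.swap := by
  constructor <;>
  · rintro ⟨a, b, ha, hb, h₁, h₂, h₃, h₄⟩
    exact ⟨b, a, hb, ha, h₁, h₂, h₃, h₄⟩

def cycleIccTopVal (d i x : ℕ) : ℕ :=
  if x < i then x else if x = d - 1 then i else x + 1

theorem val_cycleIcc_top {d : ℕ} [NeZero d] (i x : Fin d) :
    (cycleIcc i ⊤ x : ℕ) = cycleIccTopVal d i x := by
  unfold cycleIccTopVal
  split_ifs with hxi hx
  · rw [cycleIcc_of_lt hxi]
  · rw [show x = ⊤ from Fin.ext (by rw [hx, val_top]), cycleIcc_of_last le_top]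
  · have hx' : x < ⊤ := by rw [Fin.lt_def, val_top]; omega
    rw [cycleIcc_of_ge_of_lt (not_lt.1 hxi) hx']
    exact val_add_one_of_lt' (by omega)

theorem topRel_trans_cycleIcc {d : ℕ} [NeZero d] (f g : A ≃ Fin d) {αt : A} (hαt : f αt = ⊤)
    {i : Fin d} (hi : (i : ℕ) = g αt + 1) : TopRel (f, g) (f, g.trans (cycleIcc i ⊤)) := by
  have hlt : ∀ χ, (g χ : ℕ) < d := fun χ ↦ (g χ).isLt
  refine ⟨αt, g.symm ⊤, by rw [hαt, val_top], by rw [apply_symm_apply, val_top], rfl,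
    fun χ hχ ↦ ?_, ?_, fun χ hχ hlt' ↦ ?_⟩ <;>
    simp only [trans_apply, val_cycleIcc_top, cycleIccTopVal] at *
  · rw [if_pos (by omega)]
  · rw [apply_symm_apply, val_top]; split_ifs <;> omega
  · have hχ' : (g χ : ℕ) ≠ d - 1 := fun h ↦
      hχ (g.symm_apply_eq.2 (Fin.ext (by rw [h, val_top]))).symm
    specialize hlt χ
    split_ifs <;> omega

theorem botRel_trans_cycleIcc {d : ℕ} [NeZero d] (f g : A ≃ Fin d) {αb : A} (hαb : g αb = ⊤)
    {i : Fin d} (hi : (i : ℕ) = f αb + 1) : BotRel (f, g) (f.trans (cycleIcc i ⊤), g) :=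
  botRel_iff_topRel_swap.2 (topRel_trans_cycleIcc g f hαb hi)

end RauzyMoves

section Stages

/-- Top and bottom positions after `2m` alternating moves `R^t, R^b, …` from the hyperelliptic
datum, as functions of the initial top position `i`. -/
def stageTop (d m i : ℕ) : ℕ :=
  if i = 0 then 0 else if i ≤ m + 1 then 2 * i - 1 else if i + m ≤ d - 1 then i + m
  else 2 * (d - i)

def stageBot (d m i : ℕ) : ℕ :=
  if i < m then 2 * i + 1 else if i + m ≤ d - 1 then d - 1 - i + m else 2 * (d - i) - 2

variable {d m j : ℕ}

theorem stageTop_zero (hj : j < d) : stageTop d 0 j = j := by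
  unfold stageTop; split_ifs <;> omega

theorem stageBot_zero (hj : j < d) : stageBot d 0 j = d - 1 - j := by
  unfold stageBot; split_ifs <;> omega

theorem eq_of_stageTop_eq_sub_one (hm : 2 * m + 2 ≤ d) (hj : j < d)
    (h : stageTop d m j = d - 1) : j = d - 1 - m := by
  unfold stageTop at h; split_ifs at h <;> omega

theorem stageBot_sub_one_sub (hm : 2 * m + 2 ≤ d) : stageBot d m (d - 1 - m) = 2 * m := by
  unfold stageBot; split_ifs <;> omega

theorem cycleIccTopVal_stageBot (hm : 2 * m + 2 ≤ d) (hj : j < d) :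
    cycleIccTopVal d (2 * m + 1) (stageBot d m j) = stageBot d (m + 1) j := by
  unfold cycleIccTopVal stageBot; split_ifs <;> omega

theorem eq_of_stageBot_succ_eq_sub_one (hm : 2 * m + 3 ≤ d) (hj : j < d)
    (h : stageBot d (m + 1) j = d - 1) : j = m + 1 := by
  unfold stageBot at h; split_ifs at h <;> omega

theorem stageTop_succ_self : stageTop d m (m + 1) = 2 * m + 1 := by
  unfold stageTop; split_ifs <;> omega

theorem cycleIccTopVal_stageTop (hm : 2 * m + 4 ≤ d) (hj : j < d) :
    cycleIccTopVal d (2 * m + 2) (stageTop d m j) = stageTop d (m + 1) j := by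
  unfold cycleIccTopVal stageTop; split_ifs <;> omega

theorem stageBot_eq_stageTop_finRotate (hd : 2 ≤ d) (j : Fin d) :
    stageBot d ((d - 1) / 2) j = stageTop d ((d - 2) / 2) (finRotate d j) := by
  obtain ⟨n, rfl⟩ : ∃ n, d = n + 1 := ⟨d - 1, by omega⟩
  have hj := j.isLt
  rw [coe_finRotate]
  split_ifs with hlast
  · have : (j : ℕ) = n := by rw [hlast, val_last]
    unfold stageBot stageTop; split_ifs <;> omega
  · have : (j : ℕ) ≠ n := fun h ↦ hlast (Fin.ext h)
    simp only [stageBot, stageTop, Nat.add_one_ne_zero, if_false]; split_ifs <;> omega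

end Stages

section AlternatingMoves

variable {A : Type*} {d : ℕ}

/-- `P` is the datum reached from the hyperelliptic datum with top `e` by `n` alternating moves
`R^t, R^b, R^t, …`. -/
def IsStage (e : A ≃ Fin d) (n : ℕ) (P : (A ≃ Fin d) × (A ≃ Fin d)) : Prop :=
  (∀ a, (P.1 a : ℕ) = stageTop d (n / 2) (e a)) ∧
    ∀ a, (P.2 a : ℕ) = stageBot d ((n + 1) / 2) (e a)

theorem isStage_zero {e g : A ≃ Fin d} (hg : ∀ a, (e a : ℕ) + g a = d - 1) :
    IsStage e 0 (e, g) := by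
  refine ⟨fun a ↦ (stageTop_zero (e a).isLt).symm, fun a ↦ ?_⟩
  show (g a : ℕ) = stageBot d 0 (e a)
  rw [stageBot_zero (e a).isLt]
  have := hg a
  omega

theorem IsStage.exists_topRel {e : A ≃ Fin d} {m : ℕ} {P : (A ≃ Fin d) × (A ≃ Fin d)}
    (hm : 2 * m + 3 ≤ d) (hP : IsStage e (2 * m) P) :
    ∃ Q, TopRel P Q ∧ IsStage e (2 * m + 1) Q := by
  have : NeZero d := ⟨by omega⟩
  obtain ⟨f, g⟩ := P
  obtain ⟨hf, hg⟩ := hP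
  simp only [show 2 * m / 2 = m by omega, show (2 * m + 1) / 2 = m by omega] at hf hg
  have hαt : f (f.symm ⊤) = ⊤ := f.apply_symm_apply ⊤
  have heαt : (e (f.symm ⊤) : ℕ) = d - 1 - m :=
    eq_of_stageTop_eq_sub_one (by omega) (e _).isLt (by rw [← hf, hαt, val_top])
  refine ⟨_, topRel_trans_cycleIcc f g hαt (i := ⟨2 * m + 1, by omega⟩) ?_, ?_, fun a ↦ ?_⟩
  · rw [hg, heαt, stageBot_sub_one_sub (by omega)]
  · simpa only [show (2 * m + 1) / 2 = m by omega] using hf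
  · simp only [trans_apply, val_cycleIcc_top, hg, show (2 * m + 1 + 1) / 2 = m + 1 by omega]
    exact cycleIccTopVal_stageBot (by omega) (e a).isLt

theorem IsStage.exists_botRel {e : A ≃ Fin d} {m : ℕ} {P : (A ≃ Fin d) × (A ≃ Fin d)}
    (hm : 2 * m + 4 ≤ d) (hP : IsStage e (2 * m + 1) P) :
    ∃ Q, BotRel P Q ∧ IsStage e (2 * m + 2) Q := by
  have : NeZero d := ⟨by omega⟩
  obtain ⟨f, g⟩ := P
  obtain ⟨hf, hg⟩ := hP
  simp only [show (2 * m + 1) / 2 = m by omega, show (2 * m + 1 + 1) / 2 = m + 1 by omega]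
    at hf hg
  have hαb : g (g.symm ⊤) = ⊤ := g.apply_symm_apply ⊤
  have heαb : (e (g.symm ⊤) : ℕ) = m + 1 :=
    eq_of_stageBot_succ_eq_sub_one (by omega) (e _).isLt (by rw [← hg, hαb, val_top])
  refine ⟨_, botRel_trans_cycleIcc f g hαb (i := ⟨2 * m + 2, by omega⟩) ?_, fun a ↦ ?_, ?_⟩
  · rw [hf, heαb, stageTop_succ_self]
  · simp only [trans_apply, val_cycleIcc_top, hf, show (2 * m + 2) / 2 = m + 1 by omega]
    exact cycleIccTopVal_stageTop hm (e a).isLt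
  · simpa only [show (2 * m + 2 + 1) / 2 = m + 1 by omega] using hg

theorem IsStage.exists_stepRel {e : A ≃ Fin d} {n : ℕ} {P : (A ≃ Fin d) × (A ≃ Fin d)}
    (hn : n + 3 ≤ d) (hP : IsStage e n P) : ∃ Q, StepRel P Q ∧ IsStage e (n + 1) Q := by
  obtain ⟨m, rfl | rfl⟩ := Nat.even_or_odd' n
  · obtain ⟨Q, hPQ, hQ⟩ := hP.exists_topRel hn
    exact ⟨Q, Or.inl hPQ, hQ⟩
  · obtain ⟨Q, hPQ, hQ⟩ := hP.exists_botRel (by omega)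
    exact ⟨Q, Or.inr hPQ, hQ⟩

theorem exists_reflTransGen_isStage {e : A ≃ Fin d} {P₀ : (A ≃ Fin d) × (A ≃ Fin d)}
    (h₀ : IsStage e 0 P₀) {n : ℕ} (hn : n + 2 ≤ d) :
    ∃ P, Relation.ReflTransGen StepRel P₀ P ∧ IsStage e n P := by
  induction n with
  | zero => exact ⟨P₀, .refl, h₀⟩
  | succ n ih =>
    obtain ⟨P, hreach, hP⟩ := ih (by omega)
    obtain ⟨Q, hPQ, hQ⟩ := hP.exists_stepRel (by omega)
    exact ⟨Q, hreach.tail hPQ, hQ⟩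

theorem IsStage.snd_eq_fst_finRotate {e : A ≃ Fin d} {P : (A ≃ Fin d) × (A ≃ Fin d)}
    (hd : 2 ≤ d) (hP : IsStage e (d - 2) P) (a : A) :
    P.2 a = P.1 (e.symm (finRotate d (e a))) := by
  apply Fin.ext
  rw [hP.2, hP.1, apply_symm_apply, show (d - 2 + 1) / 2 = (d - 1) / 2 by omega]
  exact stageBot_eq_stageTop_finRotate hd (e a)

end AlternatingMoves

theorem symm_trans_eq_conj_finRotate {A : Type*} {d : ℕ} {e f g : A ≃ Fin d}
    (h : ∀ a, g a = f (e.symm (finRotate d (e a)))) :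
    f.symm.trans g = e.symm.trans f * finRotate d * (e.symm.trans f)⁻¹ := by
  ext x
  obtain ⟨a, rfl⟩ := f.surjective x
  simp [Perm.mul_apply, h]

theorem orderOf_finRotate_of_le {d : ℕ} (hd : 2 ≤ d) : orderOf (finRotate d) = d := by
  rw [(isCycle_finRotate_of_le hd).orderOf, support_finRotate_of_le hd, Finset.card_univ,
    Fintype.card_fin]

theorem isCycle_and_orderOf_conj_finRotate {d : ℕ} (hd : 2 ≤ d) (z : Perm (Fin d)) :
    (z * finRotate d * z⁻¹).IsCycle ∧ orderOf (z * finRotate d * z⁻¹) = d := by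
  refine ⟨(isCycle_finRotate_of_le hd).conj, ?_⟩
  rw [← MulAut.conj_apply, MulEquiv.orderOf_eq, orderOf_finRotate_of_le hd]

variable {A : Type*} [Fintype A] [DecidableEq A]

/-- For every `d ≥ 2`, the Rauzy class of the hyperelliptic combinatorial datum
(`π_t(α) + π_b(α) = d + 1` for all `α`, i.e. positions sum to `d - 1` when
0-indexed) contains a cyclic combinatorial datum `π*`, i.e. one for which
`σ(π*) = π*_b ∘ (π*_t)⁻¹` is a cycle of maximal order `d`. -/
theorem hyperelliptic_class_contains_cyclic_datum
    (h2 : 2 ≤ Fintype.card A)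
    (πt πb : A ≃ Fin (Fintype.card A))
    (hhyp : ∀ a : A, (πt a : ℕ) + (πb a : ℕ) = Fintype.card A - 1) :
    ∃ Pstar : (A ≃ Fin (Fintype.card A)) × (A ≃ Fin (Fintype.card A)),
      Relation.ReflTransGen StepRel (πt, πb) Pstar ∧
      Equiv.Perm.IsCycle (Pstar.1.symm.trans Pstar.2 : Equiv.Perm (Fin (Fintype.card A))) ∧
      orderOf (Pstar.1.symm.trans Pstar.2 : Equiv.Perm (Fin (Fintype.card A))) = Fintype.card A := by
  obtain ⟨P, hreach, hP⟩ :=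
    exists_reflTransGen_isStage (isStage_zero hhyp) (n := Fintype.card A - 2) (by omega)
  refine ⟨P, hreach, ?_⟩
  rw [symm_trans_eq_conj_finRotate (hP.snd_eq_fst_finRotate h2)]
  exact isCycle_and_orderOf_conj_finRotate h2 _

end RauzyHyp
end
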